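/- arXiv:1904.13343 — 10 statements merged into one kernel-verified Lean document; each statement's English description precedes it below -/
import Mathlib

section
/- Let (X, 𝒜, μ) be a probability space and S : X → X a measure-preserving map that is ergodic with respect to μ. Then for every integer N ≥ 1 there exist an integer k with 1 ≤ k ≤ N and measurable sets A_1, …, A_k ⊆ X such that: (1) μ(A_i ∩ A_j) = 0 for i ≠ j and μ(A_1 ∪ … ∪ A_k) = 1; (2) μ(A_j) ≥ 1/N for each j; and (3) for each j the restricted measure μ|_{A_j} is invariant under the N-th iterate S^N and S^N is ergodic with respect to μ|_{A_j}. -/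
/-!
Write `T = S^[N]`. If `B` is `T`-invariant mod `μ` and not null, then `⋃ i < N, S^[i] ⁻¹' B` is
`S`-invariant mod `μ`, hence of full measure, so `μ B ≥ 1 / N`. Consequently some nonnull
`T`-invariant set `A` has measure less than twice that of every nonnull `T`-invariant set. Such a
set cannot split into two nonnull invariant pieces: it is an atom of the `T`-invariant sets, and
`T` is ergodic on it. Since `S` preserves `μ` and commutes with `T`, every `S^[j] ⁻¹' A` has the
same property. Two atoms are a.e. disjoint or a.e. equal, so if `k` is the least period of `A`
mod `μ`, the sets `S^[j] ⁻¹' A`, `j < k`, are pairwise a.e. disjoint, and by the same sweeping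
argument their union has full measure.
-/

open MeasureTheory Filter Set
open scoped ENNReal

section

variable {X : Type*} [MeasurableSpace X] {μ : Measure X} {S T : X → X} {s t A B : Set X}

def IsAEInvariant (T : X → X) (μ : Measure X) (s : Set X) : Prop :=
  MeasurableSet s ∧ T ⁻¹' s =ᵐ[μ] s

namespace IsAEInvariant

theorem univ : IsAEInvariant T μ univ := ⟨.univ, .of_eq preimage_univ⟩

theorem inter (hs : IsAEInvariant T μ s) (ht : IsAEInvariant T μ t) :
    IsAEInvariant T μ (s ∩ t) :=
  ⟨hs.1.inter ht.1, by rw [preimage_inter]; exact hs.2.inter ht.2⟩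

theorem diff (hs : IsAEInvariant T μ s) (ht : IsAEInvariant T μ t) :
    IsAEInvariant T μ (s \ t) :=
  ⟨hs.1.diff ht.1, by rw [preimage_sdiff]; exact hs.2.diff ht.2⟩

theorem preimage {g : X → X} (hg : Measure.QuasiMeasurePreserving g μ μ)
    (hgT : Function.Commute g T) (hs : IsAEInvariant T μ s) : IsAEInvariant T μ (g ⁻¹' s) :=
  ⟨hg.measurable hs.1, by
    rw [← preimage_comp, hgT.comp_eq, preimage_comp]; exact hg.preimage_ae_eq hs.2⟩

end IsAEInvariant

theorem MeasureTheory.MeasurePreserving.ae_eq_of_preimage_ae_eq {g : X → X}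
    (hg : MeasurePreserving g μ μ) (hs : MeasurableSet s) (ht : MeasurableSet t)
    (h : g ⁻¹' s =ᵐ[μ] g ⁻¹' t) : s =ᵐ[μ] t := by
  rw [ae_eq_set, ← hg.measure_preimage (hs.diff ht).nullMeasurableSet,
    ← hg.measure_preimage (ht.diff hs).nullMeasurableSet]
  exact ae_eq_set.mp h

theorem Ergodic.iUnion_preimage_iterate_ae_eq_univ [IsFiniteMeasure μ] (hS : Ergodic S μ)
    {k : ℕ} (hk : 0 < k) (hB : IsAEInvariant (S^[k]) μ B) (hB0 : μ B ≠ 0) :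
    ⋃ i : Fin k, S^[i] ⁻¹' B =ᵐ[μ] univ := by
  set U := ⋃ i : Fin k, S^[i] ⁻¹' B
  have hBU : B ⊆ U := fun x hx => mem_iUnion.mpr ⟨⟨0, hk⟩, hx⟩
  have hSU : S ⁻¹' U ≤ᵐ[μ] U := by
    filter_upwards [hB.2] with x hx hxU
    obtain ⟨i, hi⟩ := mem_iUnion.mp hxU
    rw [mem_preimage, ← Function.iterate_succ_apply] at hi
    rcases (Nat.succ_le_of_lt i.isLt).lt_or_eq with hlt | heq
    · exact mem_iUnion.mpr ⟨⟨_, hlt⟩, hi⟩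
    · rw [heq] at hi
      exact hBU (cast hx hi)
  have hUm : MeasurableSet U := .iUnion fun i => hS.measurable.iterate _ hB.1
  exact (hS.ae_empty_or_univ_of_preimage_ae_le hUm.nullMeasurableSet hSU).resolve_left
    fun hU => hB0 (measure_mono_null hBU (ae_eq_empty.mp hU))

theorem Ergodic.one_div_le_measure [IsProbabilityMeasure μ] (hS : Ergodic S μ)
    {N : ℕ} (hN : 0 < N) (hB : IsAEInvariant (S^[N]) μ B) (hB0 : μ B ≠ 0) :
    1 / (N : ℝ≥0∞) ≤ μ B := by
  refine ENNReal.div_le_of_le_mul ?_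
  calc 1 = μ (⋃ i : Fin N, S^[i] ⁻¹' B) := by
        rw [measure_congr (hS.iUnion_preimage_iterate_ae_eq_univ hN hB hB0), measure_univ]
    _ ≤ ∑ i : Fin N, μ (S^[i] ⁻¹' B) := measure_iUnion_fintype_le μ _
    _ = μ B * N := by
        simp [(hS.iterate _).measure_preimage hB.1.nullMeasurableSet, mul_comm]

def IsInvariantAtom (T : X → X) (μ : Measure X) (A : Set X) : Prop :=
  IsAEInvariant T μ A ∧ μ A ≠ 0 ∧
    ∀ B, IsAEInvariant T μ B → μ (A ∩ B) = 0 ∨ μ (A \ B) = 0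

theorem isInvariantAtom_of_forall_lt_two_mul (hA : IsAEInvariant T μ A)
    (hA0 : μ A ≠ 0) (hsmall : ∀ B, IsAEInvariant T μ B → μ B ≠ 0 → μ A < 2 * μ B) :
    IsInvariantAtom T μ A := by
  refine ⟨hA, hA0, fun B hB => ?_⟩
  by_contra! h
  have := ENNReal.add_lt_add (hsmall _ (hA.inter hB) h.1) (hsmall _ (hA.diff hB) h.2)
  rw [← mul_add, measure_inter_add_sdiff A hB.1, two_mul] at this
  exact this.false

theorem exists_isAEInvariant_forall_lt_two_mul [IsFiniteMeasure μ] [NeZero μ] {c : ℝ≥0∞}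
    (hc : c ≠ 0) (hlb : ∀ B, IsAEInvariant T μ B → μ B ≠ 0 → c ≤ μ B) :
    ∃ A, IsAEInvariant T μ A ∧ μ A ≠ 0 ∧
      ∀ B, IsAEInvariant T μ B → μ B ≠ 0 → μ A < 2 * μ B := by
  set m := ⨅ (B) (_ : IsAEInvariant T μ B) (_ : μ B ≠ 0), μ B
  have hm_le : ∀ B, IsAEInvariant T μ B → μ B ≠ 0 → m ≤ μ B := fun B hB hB0 =>
    (iInf₂_le B hB).trans (iInf_le _ hB0)
  have hm0 : m ≠ 0 := ne_bot_of_le_ne_bot hc (le_iInf₂ fun B hB => le_iInf (hlb B hB))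
  have hm_top : m ≠ ∞ :=
    ((hm_le _ IsAEInvariant.univ (NeZero.ne _)).trans_lt (measure_lt_top μ _)).ne
  have hm : m < 2 * m := by
    rw [two_mul]; exact ENNReal.lt_add_right hm_top hm0
  simp only [m, iInf_lt_iff] at hm
  obtain ⟨A, hA, hA0, hAm⟩ := hm
  exact ⟨A, hA, hA0, fun B hB hB0 => hAm.trans_le (by gcongr; exact hm_le B hB hB0)⟩

theorem IsInvariantAtom.ergodic_restrict (hT : MeasurePreserving T μ μ)
    (hA : IsInvariantAtom T μ A) : Ergodic T (μ.restrict A) where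
  toMeasurePreserving := by
    simpa only [Measure.restrict_congr_set hA.1.2] using hT.restrict_preimage hA.1.1
  aeconst_set s hs hTs := by
    rw [eventuallyConst_set']
    rcases hA.2.2 s ⟨hs, .of_eq hTs⟩ with h | h
    · left
      rwa [ae_eq_empty, Measure.restrict_apply hs, inter_comm]
    · right
      rwa [ae_eq_univ, Measure.restrict_apply hs.compl, inter_comm, ← sdiff_eq]

theorem IsInvariantAtom.measure_inter_eq_zero_or_ae_eq (hA : IsInvariantAtom T μ A)
    (hB : IsInvariantAtom T μ B) : μ (A ∩ B) = 0 ∨ A =ᵐ[μ] B := by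
  rcases hA.2.2 B hB.1 with h | hAB
  · exact .inl h
  rcases hB.2.2 A hA.1 with h | hBA
  · exact .inl (inter_comm A B ▸ h)
  · exact .inr (ae_eq_set.mpr ⟨hAB, hBA⟩)

theorem pairwise_measure_preimage_iterate_inter_eq_zero (hS : MeasurePreserving S μ μ)
    (hatom : ∀ j, IsInvariantAtom T μ (S^[j] ⁻¹' A)) {k : ℕ}
    (hk : ∀ n, 0 < n → n < k → ¬S^[n] ⁻¹' A =ᵐ[μ] A) :
    Pairwise fun i j : Fin k => μ (S^[i] ⁻¹' A ∩ S^[j] ⁻¹' A) = 0 := by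
  have key {i j : ℕ} (hij : i < j) (hj : j < k) : μ (S^[i] ⁻¹' A ∩ S^[j] ⁻¹' A) = 0 := by
    refine ((hatom i).measure_inter_eq_zero_or_ae_eq (hatom j)).resolve_right fun h => ?_
    refine hk (j - i) (by omega) (by omega) ?_
    refine (hS.iterate i).ae_eq_of_preimage_ae_eq (hatom (j - i)).1.1 (hatom 0).1.1 ?_
    rw [← preimage_comp, ← Function.iterate_add, Nat.sub_add_cancel hij.le]
    exact h.symm
  intro i j hij
  rcases Fin.lt_or_lt_of_ne hij with h | h
  · exact key h j.isLt
  · rw [inter_comm]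
    exact key h i.isLt

end

/-- Decomposition of an ergodic measure-preserving map into the ergodic
components of its `N`-th power. -/
theorem ergodic_decomposition_of_pow
    {X : Type*} [MeasurableSpace X] (μ : Measure X) [IsProbabilityMeasure μ]
    (S : X → X) (hS : Ergodic S μ) (N : ℕ) (hN : 1 ≤ N) :
    ∃ k, 1 ≤ k ∧ k ≤ N ∧ ∃ A : Fin k → Set X,
      (∀ j, MeasurableSet (A j)) ∧
      (∀ i j, i ≠ j → μ (A i ∩ A j) = 0) ∧
      μ (⋃ j, A j) = 1 ∧
      (∀ j, 1 / (N : ℝ≥0∞) ≤ μ (A j)) ∧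
      (∀ j, Ergodic (S^[N]) (μ.restrict (A j))) := by
  classical
  obtain ⟨A, hA, hA0, hAsmall⟩ := exists_isAEInvariant_forall_lt_two_mul (T := S^[N]) (μ := μ)
    (by simp) fun B hB hB0 => hS.one_div_le_measure hN hB hB0
  have hμ (j : ℕ) : μ (S^[j] ⁻¹' A) = μ A :=
    (hS.iterate j).measure_preimage hA.1.nullMeasurableSet
  have hatom (j : ℕ) : IsInvariantAtom (S^[N]) μ (S^[j] ⁻¹' A) :=
    isInvariantAtom_of_forall_lt_two_mul
      (hA.preimage (hS.iterate j).quasiMeasurePreserving (.iterate_iterate_self S j N))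
      (hμ j ▸ hA0) (hμ j ▸ hAsmall)
  have hper : ∃ k, 0 < k ∧ S^[k] ⁻¹' A =ᵐ[μ] A := ⟨N, hN, hA.2⟩
  obtain ⟨hk0, hkA⟩ := Nat.find_spec hper
  refine ⟨Nat.find hper, hk0, Nat.find_le ⟨hN, hA.2⟩, fun j => S^[j] ⁻¹' A,
    fun j => (hatom j).1.1, ?_, ?_, fun j => ?_,
    fun j => (hatom j).ergodic_restrict (hS.iterate N)⟩
  · exact pairwise_measure_preimage_iterate_inter_eq_zero hS.toMeasurePreserving hatom
      fun n hn hnk h => Nat.find_min hper hnk ⟨hn, h⟩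
  · rw [measure_congr (hS.iUnion_preimage_iterate_ae_eq_univ hk0 ⟨hA.1, hkA⟩ hA0), measure_univ]
  · rw [hμ]
    exact hS.one_div_le_measure hN hA hA0
end

section
/- Let (X, 𝒜, m) be a probability space, S : X → X a measure-preserving map, g ∈ L¹(m), and λ > 0. Let (ψ_N)_{N≥1} be a sequence of m-integrable functions on X such that for every N, ψ_N ≤ Σ_{j=0}^{N−1} g∘S^j holds m-almost everywhere, and such that (1/N)·ψ_N → −λ m-almost everywhere as N → ∞. Then there exist c > 0 and N₀ ∈ ℕ such that ∫ ψ_N dm < −c for all N ≥ N₀. -/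
/-!
Write `g ≤ K + (g - K)⁺` with `K` so large that `∫ (g - K)⁺ < λ / 4`. Summing along the orbit,
`ψ_N / N ≤ min (ψ_N / N) K + A_N` a.e., where `A_N` is the Birkhoff average of `(g - K)⁺`, whose
integral is `∫ (g - K)⁺` by invariance of `m`. Clamping `min (ψ_N / N) K` from below at `-λ` keeps
the inequality and makes it bounded with a.e. limit `-λ`, so by dominated convergence its integral
is eventually below `-λ / 2`. Hence `∫ ψ_N / N < -λ / 4` for all large `N`.
-/

open MeasureTheory Filter

theorem abs_max_min_le (y a b : ℝ) : |max (min y b) a| ≤ max |a| |b| := by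
  rw [abs_le]
  constructor
  · linarith [le_max_right (min y b) a, neg_abs_le a, le_max_left |a| |b|]
  · exact max_le ((min_le_right y b).trans ((le_abs_self b).trans (le_max_right _ _)))
      ((le_abs_self a).trans (le_max_left _ _))

theorem div_le_min_div_add_div {a b K n : ℝ} (hn : 0 < n) (hb : 0 ≤ b) (h : a ≤ n * K + b) :
    a / n ≤ min (a / n) K + b / n := by
  rcases le_total (a / n) K with hK | hK
  · rw [min_eq_left hK]
    linarith [div_nonneg hb hn.le]
  · rw [min_eq_right hK, ← mul_div_cancel_left₀ K hn.ne', ← add_div]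
    exact div_le_div_of_nonneg_right h hn.le

namespace MeasureTheory

variable {X : Type*} [MeasurableSpace X] {μ : Measure X}

theorem MeasurePreserving.integrable_birkhoffSum {S : X → X}
    (hS : MeasurePreserving S μ μ) {f : X → ℝ} (hf : Integrable f μ) (n : ℕ) :
    Integrable (birkhoffSum S f n) μ :=
  integrable_finsetSum _ fun j _ => (hS.iterate j).integrable_comp_of_integrable hf

theorem MeasurePreserving.integral_birkhoffSum {S : X → X}
    (hS : MeasurePreserving S μ μ) {f : X → ℝ} (hf : Integrable f μ) (n : ℕ) :
    ∫ x, birkhoffSum S f n x ∂μ = n * ∫ x, f x ∂μ := by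
  have hcomp : ∀ j, ∫ x, f (S^[j] x) ∂μ = ∫ x, f x ∂μ := fun j => by
    have hSj := hS.iterate j
    rw [← integral_map hSj.aemeasurable (by rw [hSj.map_eq]; exact hf.aestronglyMeasurable),
      hSj.map_eq]
  simp only [birkhoffSum]
  rw [integral_finsetSum (f := fun j x => f (S^[j] x)) _ fun j _ =>
    (hS.iterate j).integrable_comp_of_integrable hf]
  simp [hcomp]

theorem tendsto_integral_max_sub_nat_zero {f : X → ℝ} (hf : Integrable f μ) :
    Tendsto (fun n : ℕ => ∫ x, max (f x - n) 0 ∂μ) atTop (nhds 0) := by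
  have hlim : ∀ x, Tendsto (fun n : ℕ => max (f x - n) 0) atTop (nhds 0) := fun x =>
    tendsto_const_nhds.congr' <| by
      filter_upwards [(tendsto_natCast_atTop_atTop (R := ℝ)).eventually_ge_atTop (f x)]
        with n hn
      exact (max_eq_right (by linarith)).symm
  simpa using tendsto_integral_of_dominated_convergence (F := fun (n : ℕ) x => max (f x - n) 0)
    (fun x => ‖f x‖)
    (fun n => (hf.aestronglyMeasurable.sub aestronglyMeasurable_const).sup
      aestronglyMeasurable_const) hf.norm
    (fun n => ae_of_all _ fun x => by
      rw [Real.norm_of_nonneg (le_max_right _ _)]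
      exact max_le (by linarith [Real.le_norm_self (f x), n.cast_nonneg (α := ℝ)]) (norm_nonneg _))
    (ae_of_all _ hlim)

theorem AEStronglyMeasurable.integrable_max_min [IsFiniteMeasure μ] {f : X → ℝ}
    (hf : AEStronglyMeasurable f μ) (a b : ℝ) : Integrable (fun x => max (min (f x) b) a) μ :=
  (integrable_const (max |a| |b|)).mono' ((hf.inf aestronglyMeasurable_const).sup
    aestronglyMeasurable_const) (ae_of_all _ fun x => abs_max_min_le (f x) a b)

theorem tendsto_integral_max_min_of_ae_tendsto [IsProbabilityMeasure μ] {ι : Type*}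
    {l : Filter ι} [l.IsCountablyGenerated] {f : ι → X → ℝ} {L : ℝ} (a b : ℝ)
    (hf : ∀ᶠ i in l, AEStronglyMeasurable (f i) μ)
    (hlim : ∀ᵐ x ∂μ, Tendsto (fun i => f i x) l (nhds L)) :
    Tendsto (fun i => ∫ x, max (min (f i x) b) a ∂μ) l (nhds (max (min L b) a)) := by
  simpa using tendsto_integral_filter_of_dominated_convergence (fun _ => max |a| |b|)
    (hf.mono fun i hi => (hi.inf aestronglyMeasurable_const).sup aestronglyMeasurable_const)
    (Eventually.of_forall fun i => ae_of_all _ fun x => abs_max_min_le _ a b) (integrable_const _)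
    (hlim.mono fun x hx => (hx.min tendsto_const_nhds).max tendsto_const_nhds)

theorem integral_div_le_integral_max_min_add [IsFiniteMeasure μ] {S : X → X}
    (hS : MeasurePreserving S μ μ) {g F ψ : X → ℝ} {K : ℝ} (hF : Integrable F μ)
    (hF0 : ∀ x, 0 ≤ F x) (hgF : ∀ x, g x ≤ K + F x) (hψ : Integrable ψ μ) {n : ℕ} (hn : 0 < n)
    (hle : ∀ᵐ x ∂μ, ψ x ≤ birkhoffSum S g n x) (a : ℝ) :
    (∫ x, ψ x ∂μ) / n ≤ ∫ x, max (min (ψ x / n) K) a ∂μ + ∫ x, F x ∂μ := by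
  have hn' : (0 : ℝ) < n := Nat.cast_pos.2 hn
  have hgK : ∀ x, birkhoffSum S g n x ≤ n * K + birkhoffSum S F n x := fun x => by
    simpa [birkhoffSum, Finset.sum_add_distrib] using
      Finset.sum_le_sum fun j (_ : j ∈ Finset.range n) => hgF (S^[j] x)
  have hpt : ∀ᵐ x ∂μ, ψ x / n ≤ max (min (ψ x / n) K) a + birkhoffSum S F n x / n :=
    hle.mono fun x hx => (div_le_min_div_add_div hn'
      (Finset.sum_nonneg fun j _ => hF0 _) (hx.trans (hgK x))).trans
        (add_le_add (le_max_left _ _) le_rfl)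
  calc (∫ x, ψ x ∂μ) / n = ∫ x, ψ x / n ∂μ := (integral_div _ _).symm
    _ ≤ ∫ x, (max (min (ψ x / n) K) a + birkhoffSum S F n x / n) ∂μ :=
      integral_mono_ae (hψ.div_const _) (((hψ.div_const _).aestronglyMeasurable.integrable_max_min
        a K).add ((hS.integrable_birkhoffSum hF n).div_const _)) hpt
    _ = ∫ x, max (min (ψ x / n) K) a ∂μ + ∫ x, F x ∂μ := by
      rw [integral_add ((hψ.div_const _).aestronglyMeasurable.integrable_max_min a K)
        ((hS.integrable_birkhoffSum hF n).div_const _), integral_div,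
        hS.integral_birkhoffSum hF, mul_div_cancel_left₀ _ hn'.ne']

end MeasureTheory

/-- If `ψ_N` is dominated a.e. by the Birkhoff sums of an integrable `g`
and `ψ_N / N → -λ < 0` a.e., then `∫ ψ_N dm < -c < 0` for all large `N`. -/
theorem integral_neg_of_ae_tendsto_neg
    {X : Type*} [MeasurableSpace X] (m : Measure X) [IsProbabilityMeasure m]
    (S : X → X) (hS : MeasurePreserving S m m)
    (g : X → ℝ) (hg : Integrable g m) (lam : ℝ) (hlam : 0 < lam)
    (ψ : ℕ → X → ℝ) (hψint : ∀ N, 1 ≤ N → Integrable (ψ N) m)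
    (hsub : ∀ N, 1 ≤ N → ∀ᵐ x ∂m, ψ N x ≤ ∑ j ∈ Finset.range N, g (S^[j] x))
    (hlim : ∀ᵐ x ∂m, Tendsto (fun N : ℕ => ψ N x / N) atTop (nhds (-lam))) :
    ∃ c > 0, ∃ N₀ : ℕ, ∀ N, N₀ ≤ N → ∫ x, ψ N x ∂m < -c := by
  obtain ⟨K, hK⟩ : ∃ K : ℕ, ∫ x, max (g x - K) 0 ∂m < lam / 4 :=
    ((tendsto_integral_max_sub_nat_zero hg).eventually (gt_mem_nhds (by linarith))).exists
  have hclamp : ∀ᶠ N : ℕ in atTop, ∫ x, max (min (ψ N x / N) K) (-lam) ∂m < -lam / 2 := by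
    have h := tendsto_integral_max_min_of_ae_tendsto (-lam) (K : ℝ) (eventually_atTop.2
      ⟨1, fun N hN => ((hψint N hN).div_const _).aestronglyMeasurable⟩) hlim
    rw [min_eq_left (by linarith [K.cast_nonneg (α := ℝ)]), max_self] at h
    exact h.eventually (gt_mem_nhds (by linarith))
  obtain ⟨N₀, hN₀⟩ := eventually_atTop.1 (hclamp.and (eventually_ge_atTop 1))
  refine ⟨lam / 4, by positivity, N₀, fun N hN => ?_⟩
  obtain ⟨hclampN, hN1⟩ := hN₀ N hN
  have hbound := integral_div_le_integral_max_min_add (F := fun x => max (g x - K) 0) (K := K) hS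
    (hg.sub (integrable_const _)).pos_part
    (fun x => le_max_right _ _) (fun x => by linarith [le_max_left (g x - K) 0]) (hψint N hN1)
    hN1 (hsub N hN1) (-lam)
  have hN_one : (1 : ℝ) ≤ N := Nat.one_le_cast.2 hN1
  have : ∫ x, ψ N x ∂m < -lam / 4 * N := (div_lt_iff₀ (by linarith)).1 (by linarith)
  linarith [mul_le_mul_of_nonneg_left hN_one (by linarith : 0 ≤ lam / 4)]
end

section
/- Let (X, 𝒜, m) be a probability space, S : X → X a measure-preserving map that is ergodic with respect to m, N ≥ 1 an integer, c > 0, and g ∈ L¹(m) with ∫ g dm < −c. Then there exists a measurable set A ⊆ X with m(A) ≥ 1/N such that A is S^N-invariant mod m (m(A Δ (S^N)^{−1}A) = 0) and for m-almost every x ∈ A the limit lim_{n→∞} (1/n) Σ_{i=0}^{n−1} g((S^N)^i x) exists and is strictly less than −c. -/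
open MeasureTheory Filter Set
open scoped ENNReal symmDiff Topology

/-!
Garsia's maximal ergodic inequality gives `0 ≤ ∫_E f` on every invariant set `E` on which the
Birkhoff sums of `f` are unbounded above. Applied to `g - β` and `-g - γ` this shows that a.e.
the Birkhoff averages of `g` neither cross a gap infinitely often nor escape to `±∞`, which is
Birkhoff's pointwise ergodic theorem.

Put `T = S^N` and let `A` be the set where the `T`-averages of `g` converge to a limit `< -c`;
convergence and the limit are the same at `x` and `T x`, so `T⁻¹ A = A`. The averages along `S`
over `N n` steps are the means of the `T`-averages at `x, S x, …, S^(N-1) x`. If the `S`-invariant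
set `⋃_{j<N} S^{-j} A` were null, these means would a.e. stay `≥ -c`, and the maximal inequality
would force `∫ g ≥ -c`. By ergodicity that union has full measure, so `N m(A) ≥ 1`.
-/

lemma tendsto_add_mul_iff_of_tendsto {α : Type*} {F : Filter α} {e c w : α → ℝ} {l : ℝ}
    (he : Tendsto e F (𝓝 0)) (hc : Tendsto c F (𝓝 1)) :
    Tendsto (fun a => e a + c a * w a) F (𝓝 l) ↔ Tendsto w F (𝓝 l) := by
  refine ⟨fun h => ?_, fun h => by simpa using he.add (hc.mul h)⟩
  have hw : ∀ᶠ a in F, (c a)⁻¹ * ((e a + c a * w a) - e a) = w a :=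
    (hc.eventually_ne one_ne_zero).mono fun a ha => by
      rw [add_sub_cancel_left, inv_mul_cancel_left₀ ha]
  simpa using ((hc.inv₀ one_ne_zero).mul (h.sub he)).congr' hw

lemma Set.preimage_biUnion_preimage_iterate {X : Type*} {f : X → X} {A : Set X} {N : ℕ}
    (hN : N ≠ 0) (hA : f^[N] ⁻¹' A = A) :
    f ⁻¹' (⋃ j ∈ Finset.range N, f^[j] ⁻¹' A) =
      ⋃ j ∈ Finset.range N, f^[j] ⁻¹' A := by
  have hA' (y : X) : f^[N] y ∈ A ↔ y ∈ A := Set.ext_iff.1 hA y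
  ext x
  simp only [mem_preimage, mem_iUnion, Finset.mem_range, exists_prop,
    ← Function.iterate_succ_apply]
  constructor
  · rintro ⟨j, hj, hx⟩
    rcases (Nat.succ_le_of_lt hj).lt_or_eq with hj' | rfl
    · exact ⟨j + 1, hj', hx⟩
    · exact ⟨0, Nat.pos_of_ne_zero hN, (hA' x).1 hx⟩
  · rintro ⟨_ | j, hj, hx⟩
    · refine ⟨N - 1, by omega, ?_⟩
      rw [Nat.succ_eq_add_one, Nat.sub_add_cancel (Nat.one_le_iff_ne_zero.2 hN)]
      exact (hA' x).2 hx
    · exact ⟨j, by omega, hx⟩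

section BirkhoffSum

variable {X : Type*} {T : X → X} {f g : X → ℝ}

lemma birkhoffAverage_succ_eq (n : ℕ) (x : X) :
    birkhoffAverage ℝ T g (n + 1) x =
      g x / (n + 1) + n / (n + 1) * birkhoffAverage ℝ T g n (T x) := by
  rcases Nat.eq_zero_or_pos n with rfl | hn
  · simp [birkhoffAverage]
  · have : (n : ℝ) ≠ 0 := Nat.cast_ne_zero.2 hn.ne'
    simp only [birkhoffAverage, birkhoffSum_succ', smul_eq_mul, Nat.cast_add, Nat.cast_one]
    field_simp

lemma tendsto_birkhoffAverage_apply_iff {x : X} {l : ℝ} :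
    Tendsto (birkhoffAverage ℝ T g · (T x)) atTop (𝓝 l) ↔
      Tendsto (birkhoffAverage ℝ T g · x) atTop (𝓝 l) := by
  conv_rhs => rw [← tendsto_add_atTop_iff_nat 1]
  simp only [birkhoffAverage_succ_eq]
  refine (tendsto_add_mul_iff_of_tendsto ?_ (tendsto_natCast_div_add_atTop 1)).symm
  simpa [div_eq_mul_inv] using tendsto_one_div_add_atTop_nhds_zero_nat.const_mul (g x)

lemma birkhoffSum_mul_eq_sum_birkhoffSum_iterate {M : Type*} [AddCommMonoid M] (S : X → X)
    (φ : X → M) (N n : ℕ) (x : X) :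
    birkhoffSum S φ (N * n) x = ∑ j ∈ Finset.range N, birkhoffSum (S^[N]) φ n (S^[j] x) := by
  induction n with
  | zero => simp
  | succ n ih =>
    simp only [Nat.mul_succ, birkhoffSum_add, ih, birkhoffSum_succ, Finset.sum_add_distrib]
    congr 1
    refine Finset.sum_congr rfl fun j _ => congr_arg φ ?_
    rw [← Function.iterate_mul, ← Function.iterate_add_apply, ← Function.iterate_add_apply,
      Nat.add_comm]

lemma birkhoffAverage_mul_eq_mean (S : X → X) (N n : ℕ) (x : X) :
    birkhoffAverage ℝ S g (N * n) x =
      (N : ℝ)⁻¹ * ∑ j ∈ Finset.range N, birkhoffAverage ℝ (S^[N]) g n (S^[j] x) := by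
  simp only [birkhoffAverage, birkhoffSum_mul_eq_sum_birkhoffSum_iterate, smul_eq_mul,
    Nat.cast_mul, mul_inv, Finset.mul_sum, mul_assoc]

/-- The maximum of `0` and the Birkhoff sums `birkhoffSum T f k x`, `1 ≤ k ≤ n`. -/
noncomputable def birkhoffMax (T : X → X) (f : X → ℝ) : ℕ → X → ℝ
  | 0 => 0
  | n + 1 => fun x => max 0 (f x + birkhoffMax T f n (T x))

lemma birkhoffMax_nonneg (n : ℕ) (x : X) : 0 ≤ birkhoffMax T f n x := by
  cases n with
  | zero => rfl
  | succ n => exact le_max_left _ _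

lemma birkhoffMax_le_succ (n : ℕ) (x : X) :
    birkhoffMax T f n x ≤ birkhoffMax T f (n + 1) x := by
  induction n generalizing x with
  | zero => exact birkhoffMax_nonneg 1 x
  | succ n ih => exact max_le_max le_rfl (add_le_add_right (ih (T x)) _)

lemma monotone_birkhoffMax (x : X) : Monotone (birkhoffMax T f · x) :=
  monotone_nat_of_le_succ fun n => birkhoffMax_le_succ n x

lemma birkhoffSum_le_birkhoffMax (n : ℕ) (x : X) :
    birkhoffSum T f n x ≤ birkhoffMax T f n x := by
  induction n generalizing x with
  | zero => rfl
  | succ n ih =>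
    rw [birkhoffSum_succ']
    exact (add_le_add_right (ih (T x)) _).trans (le_max_right _ _)

lemma birkhoffMax_le_add_apply {n : ℕ} {x : X} (hx : 0 < birkhoffMax T f n x) :
    birkhoffMax T f n x ≤ f x + birkhoffMax T f n (T x) := by
  cases n with
  | zero => exact absurd hx (lt_irrefl 0)
  | succ n =>
    rw [birkhoffMax, lt_max_iff, lt_self_iff_false, false_or] at hx
    change max 0 (f x + birkhoffMax T f n (T x)) ≤ f x + birkhoffMax T f (n + 1) (T x)
    rw [max_eq_right hx.le]
    exact add_le_add_right (birkhoffMax_le_succ n (T x)) _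

def unboundedBirkhoffSumSet (T : X → X) (f : X → ℝ) : Set X :=
  {x | ¬BddAbove (range fun n => birkhoffSum T f n x)}

lemma preimage_unboundedBirkhoffSumSet :
    T ⁻¹' unboundedBirkhoffSumSet T f = unboundedBirkhoffSumSet T f := by
  ext x
  refine not_congr
    ⟨fun ⟨C, hC⟩ => ⟨max 0 (f x + C), ?_⟩, fun ⟨C, hC⟩ => ⟨C - f x, ?_⟩⟩
  · rintro _ ⟨n | n, rfl⟩
    · exact le_max_left _ _
    · dsimp only
      rw [birkhoffSum_succ']
      exact (add_le_add_right (hC (mem_range_self n)) _).trans (le_max_right _ _)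
  · rintro _ ⟨n, rfl⟩
    have := hC (mem_range_self (n + 1))
    dsimp only at this ⊢
    rw [birkhoffSum_succ'] at this
    linarith

lemma exists_birkhoffSum_pos_of_mem_unboundedBirkhoffSumSet {x : X}
    (hx : x ∈ unboundedBirkhoffSumSet T f) : ∃ n, 0 < birkhoffSum T f n x := by
  obtain ⟨_, ⟨n, rfl⟩, hpos⟩ := not_bddAbove_iff.1 hx 0
  exact ⟨n, hpos⟩

lemma mem_unboundedBirkhoffSumSet_of_frequently_lt {x : X} {β b : ℝ} (hβb : β < b)
    (h : ∃ᶠ n in atTop, b < birkhoffAverage ℝ T g n x) :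
    x ∈ unboundedBirkhoffSumSet T (fun y => g y - β) := by
  rintro ⟨C, hC⟩
  have hlarge : ∀ᶠ n : ℕ in atTop, 0 < n ∧ C < n * (b - β) :=
    (eventually_gt_atTop 0).and <| ((tendsto_natCast_atTop_atTop (R := ℝ)).atTop_mul_const
      (sub_pos.2 hβb)).eventually_gt_atTop C
  obtain ⟨n, hbn, hn, hCn⟩ := (h.and_eventually hlarge).exists
  have hsum : birkhoffSum T (fun y => g y - β) n x = birkhoffSum T g n x - n * β := by
    simp [birkhoffSum, Finset.sum_sub_distrib]
  have hbn' : n * b < birkhoffSum T g n x := by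
    rw [birkhoffAverage, smul_eq_mul] at hbn
    rwa [← div_eq_inv_mul, lt_div_iff₀ (Nat.cast_pos.2 hn), mul_comm] at hbn
  have := hC ⟨n, rfl⟩
  simp only [hsum] at this
  linarith

lemma isBoundedUnder_le_birkhoffAverage {x : X}
    (hx : x ∉ ⋂ k : ℕ, unboundedBirkhoffSumSet T (fun y => g y - k)) :
    IsBoundedUnder (· ≤ ·) atTop (birkhoffAverage ℝ T g · x) := by
  by_contra h
  simp only [IsBoundedUnder, IsBounded, eventually_map, not_exists, not_eventually,
    not_le] at h
  exact hx <| mem_iInter.2 fun k => mem_unboundedBirkhoffSumSet_of_frequently_lt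
    (lt_add_one (k : ℝ)) (h _)

def birkhoffLimitLtSet (T : X → X) (g : X → ℝ) (a : ℝ) : Set X :=
  {x | ∃ l < a, Tendsto (birkhoffAverage ℝ T g · x) atTop (𝓝 l)}

lemma preimage_birkhoffLimitLtSet {a : ℝ} :
    T ⁻¹' birkhoffLimitLtSet T g a = birkhoffLimitLtSet T g a := by
  ext x
  simp only [birkhoffLimitLtSet, mem_preimage, mem_ofPred_eq, tendsto_birkhoffAverage_apply_iff]

end BirkhoffSum

section MeasurePreserving

variable {X : Type*} [MeasurableSpace X] {μ : Measure X} {T : X → X} {f g : X → ℝ}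

lemma measurable_birkhoffSum (hT : Measurable T) (hf : Measurable f) (n : ℕ) :
    Measurable (birkhoffSum T f n) :=
  Finset.measurable_sum _ fun i _ => hf.comp (hT.iterate i)

lemma measurable_birkhoffMax (hT : Measurable T) (hf : Measurable f) (n : ℕ) :
    Measurable (birkhoffMax T f n) := by
  induction n with
  | zero => exact measurable_const
  | succ n ih => exact measurable_const.max (hf.add (ih.comp hT))

lemma measurableSet_unboundedBirkhoffSumSet (hT : Measurable T) (hf : Measurable f) :
    MeasurableSet (unboundedBirkhoffSumSet T f) :=
  (measurableSet_bddAbove_range (measurable_birkhoffSum hT hf)).compl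

lemma measurableSet_birkhoffLimitLtSet (hT : Measurable T) (hg : Measurable g) (a : ℝ) :
    MeasurableSet (birkhoffLimitLtSet T g a) := by
  have hmeas (n : ℕ) : Measurable (birkhoffAverage ℝ T g n) :=
    (measurable_birkhoffSum hT hg n).const_smul ((n : ℝ)⁻¹)
  have hlim := (StronglyMeasurable.limUnder (l := atTop) fun n =>
    (hmeas n).stronglyMeasurable).measurable
  convert (measurableSet_exists_tendsto (l := atTop) hmeas).inter
    (measurableSet_lt hlim measurable_const) using 1
  ext x
  simp only [birkhoffLimitLtSet, mem_inter_iff, mem_ofPred_eq]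
  exact ⟨fun ⟨l, hl, h⟩ => ⟨⟨l, h⟩, h.limUnder_eq ▸ hl⟩,
    fun ⟨⟨l, h⟩, hlt⟩ => ⟨l, h.limUnder_eq ▸ hlt, h⟩⟩

lemma integrable_birkhoffMax (hT : MeasurePreserving T μ μ) (hf : Measurable f)
    (hfi : Integrable f μ) (n : ℕ) : Integrable (birkhoffMax T f n) μ := by
  induction n with
  | zero => exact integrable_zero X ℝ μ
  | succ n ih =>
    have hcomp : Integrable (birkhoffMax T f n ∘ T) μ :=
      (hT.integrable_comp (measurable_birkhoffMax hT.measurable hf n).aestronglyMeasurable).2 ih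
    exact (integrable_zero X ℝ μ).sup (hfi.add hcomp)

lemma setIntegral_birkhoffMax_pos_nonneg (hT : MeasurePreserving T μ μ) (hf : Measurable f)
    (hfi : Integrable f μ) (n : ℕ) :
    0 ≤ ∫ x in {x | 0 < birkhoffMax T f n x}, f x ∂μ := by
  set M := birkhoffMax T f n
  set E := {x | 0 < M x}
  have hMm : Measurable M := measurable_birkhoffMax hT.measurable hf n
  have hM : Integrable M μ := integrable_birkhoffMax hT hf hfi n
  have hMT : Integrable (M ∘ T) μ := (hT.integrable_comp hMm.aestronglyMeasurable).2 hM
  have hM_on : ∫ x in E, M x ∂μ = ∫ x, M x ∂μ :=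
    setIntegral_eq_integral_of_forall_compl_eq_zero fun x hx =>
      le_antisymm (not_lt.1 hx) (birkhoffMax_nonneg n x)
  have hMT_on : ∫ x in E, M (T x) ∂μ ≤ ∫ x, M (T x) ∂μ :=
    setIntegral_le_integral hMT (Eventually.of_forall fun x => birkhoffMax_nonneg n (T x))
  have hMT_eq : ∫ x, M (T x) ∂μ = ∫ x, M x ∂μ := by
    rw [← integral_map hT.measurable.aemeasurable hMm.aestronglyMeasurable, hT.map_eq]
  calc (0 : ℝ) ≤ ∫ x in E, M x ∂μ - ∫ x in E, M (T x) ∂μ := by linarith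
    _ = ∫ x in E, (M x - M (T x)) ∂μ := (integral_sub hM.integrableOn hMT.integrableOn).symm
    _ ≤ ∫ x in E, f x ∂μ :=
      setIntegral_mono_on (hM.sub hMT).integrableOn hfi.integrableOn
        (measurableSet_lt measurable_const hMm) fun x hx => by
          linarith [birkhoffMax_le_add_apply (T := T) (f := f) hx]

theorem integral_nonneg_of_ae_exists_birkhoffSum_pos (hT : MeasurePreserving T μ μ)
    (hf : Measurable f) (hfi : Integrable f μ)
    (h : ∀ᵐ x ∂μ, ∃ n, 0 < birkhoffSum T f n x) :
    0 ≤ ∫ x, f x ∂μ := by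
  set E : ℕ → Set X := fun n => {x | 0 < birkhoffMax T f n x}
  have hE (n : ℕ) : MeasurableSet (E n) :=
    measurableSet_lt measurable_const (measurable_birkhoffMax hT.measurable hf n)
  have hE_mono : Monotone E := fun m n hmn x hx => hx.trans_le (monotone_birkhoffMax x hmn)
  have hE_ae : ∀ᵐ x ∂μ, x ∈ ⋃ n, E n := by
    filter_upwards [h] with x ⟨n, hn⟩
    exact mem_iUnion.2 ⟨n, hn.trans_le (birkhoffSum_le_birkhoffMax n x)⟩
  have hE_int : ∫ x in ⋃ n, E n, f x ∂μ = ∫ x, f x ∂μ :=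
    setIntegral_eq_integral_of_ae_compl_eq_zero (hE_ae.mono fun x hx hx' => absurd hx hx')
  rw [← hE_int]
  exact ge_of_tendsto' (tendsto_setIntegral_of_monotone hE hE_mono hfi.integrableOn)
    (setIntegral_birkhoffMax_pos_nonneg hT hf hfi)

variable [IsFiniteMeasure μ]

lemma mul_measureReal_le_setIntegral (hT : MeasurePreserving T μ μ) (hg : Measurable g)
    (hgi : Integrable g μ) {E : Set X} (hE : MeasurableSet E) (hinv : T ⁻¹' E = E) {β : ℝ}
    (hsub : E ⊆ unboundedBirkhoffSumSet T (fun y => g y - β)) :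
    β * μ.real E ≤ ∫ x in E, g x ∂μ := by
  have hTE : MeasurePreserving T (μ.restrict E) (μ.restrict E) := by
    simpa only [hinv] using hT.restrict_preimage hE
  have := integral_nonneg_of_ae_exists_birkhoffSum_pos (f := fun y => g y - β) hTE
    (hg.sub measurable_const) (hgi.integrableOn.sub (integrable_const β)) <|
      (ae_restrict_mem hE).mono fun x hx =>
        exists_birkhoffSum_pos_of_mem_unboundedBirkhoffSumSet (hsub hx)
  rw [integral_sub hgi.integrableOn (integrable_const β), setIntegral_const, smul_eq_mul] at this
  linarith

lemma measure_unboundedBirkhoffSumSet_inter_eq_zero (hT : MeasurePreserving T μ μ)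
    (hg : Measurable g) (hgi : Integrable g μ) {β γ : ℝ} (hβγ : 0 < β + γ) :
    μ (unboundedBirkhoffSumSet T (fun y => g y - β) ∩
      unboundedBirkhoffSumSet T (fun y => -g y - γ)) = 0 := by
  set E := unboundedBirkhoffSumSet T (fun y => g y - β) ∩
    unboundedBirkhoffSumSet T (fun y => -g y - γ)
  have hE : MeasurableSet E :=
    (measurableSet_unboundedBirkhoffSumSet hT.measurable (hg.sub measurable_const)).inter
      (measurableSet_unboundedBirkhoffSumSet hT.measurable (hg.neg.sub measurable_const))
  have hinv : T ⁻¹' E = E := by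
    simp only [E, preimage_inter, preimage_unboundedBirkhoffSumSet]
  have hupper := mul_measureReal_le_setIntegral hT hg hgi hE hinv inter_subset_left
  have hlower := mul_measureReal_le_setIntegral hT hg.neg hgi.neg hE hinv inter_subset_right
  simp only [Pi.neg_apply, integral_neg] at hlower
  have : μ.real E = 0 := by nlinarith [measureReal_nonneg (μ := μ) (s := E)]
  exact (measureReal_eq_zero_iff (measure_ne_top μ E)).1 this

lemma measure_iInter_unboundedBirkhoffSumSet_eq_zero (hT : MeasurePreserving T μ μ)
    (hg : Measurable g) (hgi : Integrable g μ) :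
    μ (⋂ k : ℕ, unboundedBirkhoffSumSet T (fun y => g y - k)) = 0 := by
  set E := ⋂ k : ℕ, unboundedBirkhoffSumSet T (fun y => g y - k)
  have hE : MeasurableSet E := MeasurableSet.iInter fun k =>
    measurableSet_unboundedBirkhoffSumSet hT.measurable (hg.sub measurable_const)
  have hinv : T ⁻¹' E = E := by
    simp only [E, preimage_iInter, preimage_unboundedBirkhoffSumSet]
  have hbound (k : ℕ) : k * μ.real E ≤ ∫ x in E, g x ∂μ :=
    mul_measureReal_le_setIntegral hT hg hgi hE hinv (iInter_subset _ k)
  by_contra hne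
  have hpos : 0 < μ.real E := ENNReal.toReal_pos hne (measure_ne_top μ E)
  obtain ⟨k, hk⟩ := exists_nat_gt ((∫ x in E, g x ∂μ) / μ.real E)
  rw [div_lt_iff₀ hpos] at hk
  linarith [hbound k]

theorem ae_exists_tendsto_birkhoffAverage (hT : MeasurePreserving T μ μ) (hg : Measurable g)
    (hgi : Integrable g μ) :
    ∀ᵐ x ∂μ, ∃ l, Tendsto (birkhoffAverage ℝ T g · x) atTop (𝓝 l) := by
  have hcross : ∀ᵐ x ∂μ, ∀ q r : ℚ, q < r →
      x ∉ unboundedBirkhoffSumSet T (fun y => g y - r) ∩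
        unboundedBirkhoffSumSet T (fun y => -g y - -q) :=
    ae_all_iff.2 fun q => ae_all_iff.2 fun r => eventually_imp_distrib_left.2 fun hqr =>
      measure_eq_zero_iff_ae_notMem.1 <| measure_unboundedBirkhoffSumSet_inter_eq_zero hT hg hgi
        (by simpa [sub_eq_add_neg] using (Rat.cast_lt (K := ℝ)).2 hqr)
  have habove := measure_eq_zero_iff_ae_notMem.1 <|
    measure_iInter_unboundedBirkhoffSumSet_eq_zero hT hg hgi
  have hbelow := measure_eq_zero_iff_ae_notMem.1 <|
    measure_iInter_unboundedBirkhoffSumSet_eq_zero hT hg.neg hgi.neg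
  filter_upwards [hcross, habove, hbelow] with x hcross habove hbelow
  refine tendsto_of_no_upcrossings Rat.denseRange_cast ?_
    (isBoundedUnder_le_birkhoffAverage habove) (isBoundedUnder_le_neg.1 ?_)
  · rintro _ ⟨a, rfl⟩ _ ⟨b, rfl⟩ hab ⟨hlow, hhigh⟩
    obtain ⟨q, haq, hqb⟩ := exists_rat_btwn hab
    obtain ⟨r, hqr, hrb⟩ := exists_rat_btwn hqb
    refine hcross q r (by exact_mod_cast hqr)
      ⟨mem_unboundedBirkhoffSumSet_of_frequently_lt hrb hhigh,
        mem_unboundedBirkhoffSumSet_of_frequently_lt (g := -g) (neg_lt_neg haq) ?_⟩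
    simpa only [birkhoffAverage_neg, Pi.neg_apply, neg_lt_neg_iff] using hlow
  · simpa only [birkhoffAverage_neg, Pi.neg_apply] using isBoundedUnder_le_birkhoffAverage hbelow

end MeasurePreserving

section Ergodic

variable {X : Type*} [MeasurableSpace X] {m : Measure X} [IsProbabilityMeasure m] {S : X → X}
  {g : X → ℝ}

lemma le_integral_of_ae_frequently_lt_birkhoffAverage (hS : MeasurePreserving S m m)
    (hg : Measurable g) (hgi : Integrable g m) {b : ℝ}
    (h : ∀ᵐ x ∂m, ∃ᶠ n in atTop, b < birkhoffAverage ℝ S g n x) :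
    b ≤ ∫ x, g x ∂m := by
  by_contra! hlt
  obtain ⟨β, hβ, hβb⟩ := exists_between hlt
  have := integral_nonneg_of_ae_exists_birkhoffSum_pos (f := fun x => g x - β) hS
    (hg.sub measurable_const) (hgi.sub (integrable_const β)) <| h.mono fun x hx =>
      exists_birkhoffSum_pos_of_mem_unboundedBirkhoffSumSet
        (mem_unboundedBirkhoffSumSet_of_frequently_lt hβb hx)
  rw [integral_sub hgi (integrable_const β), integral_const, probReal_univ, one_smul] at this
  linarith

lemma measure_biUnion_preimage_birkhoffLimitLtSet_ne_zero (hS : MeasurePreserving S m m)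
    {N : ℕ} (hN : 1 ≤ N) (hg : Measurable g) (hgi : Integrable g m) {a : ℝ}
    (hint : ∫ x, g x ∂m < a) :
    m (⋃ j ∈ Finset.range N, S^[j] ⁻¹' birkhoffLimitLtSet (S^[N]) g a) ≠ 0 := by
  rw [Ne, measure_eq_zero_iff_ae_notMem]
  intro hnot
  obtain ⟨b, hb, hba⟩ := exists_between hint
  refine (le_integral_of_ae_frequently_lt_birkhoffAverage hS hg hgi ?_).not_gt hb
  have hphase : ∀ᵐ x ∂m, ∀ j, ∃ r,
      Tendsto (birkhoffAverage ℝ (S^[N]) g · (S^[j] x)) atTop (𝓝 r) :=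
    ae_all_iff.2 fun j => (hS.iterate j).quasiMeasurePreserving.ae <|
      ae_exists_tendsto_birkhoffAverage (hS.iterate N) hg hgi
  filter_upwards [hnot, hphase] with x hx hphase
  choose r hr using hphase
  have hra (j : ℕ) (hj : j ∈ Finset.range N) : a ≤ r j :=
    not_lt.1 fun hlt => hx (mem_biUnion hj ⟨r j, hlt, hr j⟩)
  have hmean : a ≤ (N : ℝ)⁻¹ * ∑ j ∈ Finset.range N, r j := by
    rw [le_inv_mul_iff₀ (by exact_mod_cast hN)]
    simpa using Finset.sum_le_sum hra
  have hlim : Tendsto (fun n => birkhoffAverage ℝ S g (N * n) x) atTop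
      (𝓝 ((N : ℝ)⁻¹ * ∑ j ∈ Finset.range N, r j)) := by
    simp only [birkhoffAverage_mul_eq_mean]
    exact (tendsto_finsetSum _ fun j _ => hr j).const_mul _
  exact (tendsto_id.const_mul_atTop' hN).frequently
    (hlim.eventually (lt_mem_nhds (hba.trans_le hmean))).frequently

theorem one_div_le_measure_birkhoffLimitLtSet (hS : Ergodic S m) {N : ℕ} (hN : 1 ≤ N)
    (hg : Measurable g) (hgi : Integrable g m) {a : ℝ} (hint : ∫ x, g x ∂m < a) :
    1 / (N : ℝ≥0∞) ≤ m (birkhoffLimitLtSet (S^[N]) g a) := by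
  set A := birkhoffLimitLtSet (S^[N]) g a
  have hA : MeasurableSet A :=
    measurableSet_birkhoffLimitLtSet (hS.measurable.iterate N) hg a
  have hB : MeasurableSet (⋃ j ∈ Finset.range N, S^[j] ⁻¹' A) :=
    .biUnion (Finset.countable_toSet _) fun j _ => hS.measurable.iterate j hA
  have hB_inv := preimage_biUnion_preimage_iterate (by omega)
    (preimage_birkhoffLimitLtSet (T := S^[N]) (g := g) (a := a))
  have hB_one := (hS.prob_eq_zero_or_one hB hB_inv).resolve_left
    (measure_biUnion_preimage_birkhoffLimitLtSet_ne_zero hS.toMeasurePreserving hN hg hgi hint)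
  refine ENNReal.div_le_of_le_mul ?_
  calc 1 = m (⋃ j ∈ Finset.range N, S^[j] ⁻¹' A) := hB_one.symm
    _ ≤ ∑ j ∈ Finset.range N, m (S^[j] ⁻¹' A) := measure_biUnion_finset_le _ _
    _ = m A * N := by
      simp [(hS.toMeasurePreserving.iterate _).measure_preimage hA.nullMeasurableSet, mul_comm]

end Ergodic

theorem exists_pow_invariant_set_with_birkhoff_limit_lt_general
    {X : Type*} [MeasurableSpace X] (m : Measure X) [IsProbabilityMeasure m]
    (S : X → X) (hS : Ergodic S m) (N : ℕ) (hN : 1 ≤ N)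
    (c : ℝ) (g : X → ℝ) (hg : Integrable g m)
    (hint : ∫ x, g x ∂m < -c) :
    ∃ A : Set X, MeasurableSet A ∧ 1 / (N : ℝ≥0∞) ≤ m A ∧
      m (A ∆ ((S^[N]) ⁻¹' A)) = 0 ∧
      ∀ᵐ x ∂m, x ∈ A →
        ∃ l, Tendsto (fun n : ℕ => (n : ℝ)⁻¹ * ∑ i ∈ Finset.range n, g ((S^[N])^[i] x))
            atTop (nhds l) ∧ l < -c := by
  set g' := hg.1.mk g
  have hg' : Measurable g' := hg.1.stronglyMeasurable_mk.measurable
  have hgg' : ∀ᵐ x ∂m, ∀ n,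
      birkhoffAverage ℝ (S^[N]) g n x = birkhoffAverage ℝ (S^[N]) g' n x :=
    ae_all_iff.2 fun n => (hS.toMeasurePreserving.iterate N).quasiMeasurePreserving
      |>.birkhoffAverage_ae_eq_of_ae_eq ℝ hg.1.ae_eq_mk n
  refine ⟨birkhoffLimitLtSet (S^[N]) g' (-c),
    measurableSet_birkhoffLimitLtSet (hS.measurable.iterate N) hg' _,
    one_div_le_measure_birkhoffLimitLtSet hS hN hg' (hg.congr hg.1.ae_eq_mk)
      (by rwa [← integral_congr_ae hg.1.ae_eq_mk]),
    by rw [preimage_birkhoffLimitLtSet, symmDiff_self, bot_eq_empty, measure_empty], ?_⟩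
  filter_upwards [hgg'] with x hx ⟨l, hl, hlim⟩
  exact ⟨l, (tendsto_congr hx).2 hlim, hl⟩

/-- For an ergodic measure-preserving `S` and an integrable `g` with
`∫ g dm < -c`, there is a set `A` of measure at least `1/N`, invariant mod `m` under
`S^N`, on which the Birkhoff averages of `g` along `S^N` converge a.e. to a limit
smaller than `-c`. -/
theorem exists_pow_invariant_set_with_birkhoff_limit_lt
    {X : Type*} [MeasurableSpace X] (m : Measure X) [IsProbabilityMeasure m]
    (S : X → X) (hS : Ergodic S m) (N : ℕ) (hN : 1 ≤ N)
    (c : ℝ) (hc : 0 < c) (g : X → ℝ) (hg : Integrable g m)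
    (hint : ∫ x, g x ∂m < -c) :
    ∃ A : Set X, MeasurableSet A ∧ 1 / (N : ℝ≥0∞) ≤ m A ∧
      m (A ∆ ((S^[N]) ⁻¹' A)) = 0 ∧
      ∀ᵐ x ∂m, x ∈ A →
        ∃ l, Tendsto (fun n : ℕ => (n : ℝ)⁻¹ * ∑ i ∈ Finset.range n, g ((S^[N])^[i] x))
            atTop (nhds l) ∧ l < -c :=
  exists_pow_invariant_set_with_birkhoff_limit_lt_general m S hS N hN c g hg hint
end

section
/- Let (a_j)_{j≥1} be a sequence of real numbers, H ∈ ℝ with a_j ≤ H for all j, and let a₀, c₁ be real numbers with 0 < c₁ < a₀ and limsup_{n→∞} (1/n) Σ_{j=1}^{n} a_j ≥ a₀. Call an integer n ≥ 1 a c₁-hyperbolic time for the sequence if Σ_{j=n−k+1}^{n} a_j ≥ c₁·k for every k with 1 ≤ k ≤ n. Then limsup_{n→∞} (1/n)·#{1 ≤ m ≤ n : m is a c₁-hyperbolic time} ≥ (a₀ − c₁)/(H − c₁). -/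
open Filter Set

open scoped Finset

/-! With `S m = ∑_{j ≤ m} (a j - c)`, `m` is a `c`-hyperbolic time exactly when `S` attains a
weak record at `m`: `S m' ≤ S m` for all `m' < m`. The running maximum of `S` grows only at
record times and each time by at most `H - c`, so `S n ≤ (H - c) · #{records ≤ n}`. Dividing by
`n`, the average of `a` up to `n` is at most `c + (H - c)` times the frequency of hyperbolic
times up to `n`, and passing to the `limsup` gives the bound. -/

theorem Finset.sum_Icc_one_add_sum_Icc {M : Type*} [AddCommMonoid M] (f : ℕ → M) {m n : ℕ}
    (h : m ≤ n) : ∑ j ∈ Icc 1 m, f j + ∑ j ∈ Icc (m + 1) n, f j = ∑ j ∈ Icc 1 n, f j := by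
  have hIcc (k : ℕ) : Icc 1 k = Ioc 0 k := Icc_add_one_left_eq_Ioc 0 k
  rw [hIcc, hIcc, Icc_add_one_left_eq_Ioc]
  exact sum_Ioc_consecutive f (Nat.zero_le m) h

def IsRecord (s : ℕ → ℝ) (m : ℕ) : Prop := ∀ m' < m, s m' ≤ s m

open scoped Classical in
theorem le_mul_card_isRecord {s : ℕ → ℝ} {D : ℝ} (hD : 0 ≤ D) (h₀ : s 0 ≤ 0)
    (hs : ∀ m, s (m + 1) ≤ s m + D) (n : ℕ) :
    ∀ m ≤ n, s m ≤ D * #{m ∈ Finset.Icc 1 n | IsRecord s m} := by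
  induction n with
  | zero =>
    intro m hm
    simpa [Nat.le_zero.mp hm] using h₀
  | succ n ih =>
    have hcard : (#{m ∈ Finset.Icc 1 (n + 1) | IsRecord s m} : ℝ) =
        #{m ∈ Finset.Icc 1 n | IsRecord s m} + if IsRecord s (n + 1) then 1 else 0 := by
      simp only [Finset.card_filter, Finset.sum_Icc_succ_top (Nat.le_add_left 1 n)]
      push_cast
      rfl
    have hmono : D * #{m ∈ Finset.Icc 1 n | IsRecord s m} ≤
        D * #{m ∈ Finset.Icc 1 (n + 1) | IsRecord s m} := by
      rw [hcard]
      gcongr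
      split_ifs <;> norm_num
    intro m hm
    rcases hm.lt_or_eq with hm | rfl
    · exact (ih m (Nat.le_of_lt_succ hm)).trans hmono
    by_cases hrec : IsRecord s (n + 1)
    · rw [hcard, if_pos hrec]
      linarith [ih n le_rfl, hs n]
    · obtain ⟨m', hm', hlt⟩ : ∃ m' < n + 1, s (n + 1) < s m' := by
        simpa [IsRecord] using hrec
      exact hlt.le.trans ((ih m' (Nat.le_of_lt_succ hm')).trans hmono)

def IsHyperbolicTime (a : ℕ → ℝ) (c : ℝ) (m : ℕ) : Prop :=
  ∀ k, 1 ≤ k → k ≤ m → c * k ≤ ∑ j ∈ Finset.Icc (m - k + 1) m, a j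

theorem isHyperbolicTime_iff_isRecord {a : ℕ → ℝ} {c : ℝ} {m : ℕ} :
    IsHyperbolicTime a c m ↔ IsRecord (fun n ↦ ∑ j ∈ Finset.Icc 1 n, (a j - c)) m := by
  have hgain : ∀ m' ≤ m, ∑ j ∈ Finset.Icc 1 m, (a j - c) - ∑ j ∈ Finset.Icc 1 m', (a j - c) =
      ∑ j ∈ Finset.Icc (m' + 1) m, a j - c * (m - m' : ℕ) := by
    intro m' hm'
    rw [← Finset.sum_Icc_one_add_sum_Icc _ hm',
      Finset.sum_sub_distrib (s := Finset.Icc (m' + 1) m), Finset.sum_const, Nat.card_Icc,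
      nsmul_eq_mul, Nat.add_sub_add_right]
    ring
  constructor
  · intro h m' hm'
    have hk := h (m - m') (by omega) (Nat.sub_le m m')
    rw [Nat.sub_sub_self hm'.le] at hk
    linarith [hgain m' hm'.le]
  · intro h k hk hkm
    have hg := hgain (m - k) (Nat.sub_le m k)
    rw [Nat.sub_sub_self hkm] at hg
    linarith [h (m - k) (by omega)]

/-- In `ℝ`, the `limsup` of a function that is not bounded below is the junk value `0`, which
`0 < a` excludes. -/
theorem le_of_le_limsup_of_eventually_le {ι : Type*} {f : Filter ι} {u : ι → ℝ} {a b : ℝ}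
    (ha : 0 < a) (h : a ≤ limsup u f) (hb : ∀ᶠ i in f, u i ≤ b) : a ≤ b := by
  rw [limsup_eq] at h
  by_cases hbdd : BddBelow {b | ∀ᶠ i in f, u i ≤ b}
  · exact h.trans (csInf_le hbdd hb)
  · rw [Real.sInf_of_not_bddBelow hbdd] at h
    linarith

theorem average_le_add_mul_frequency {a : ℕ → ℝ} {H c : ℝ} (hH : ∀ j, 1 ≤ j → a j ≤ H)
    (hcH : c ≤ H) {n : ℕ} (hn : 0 < n) :
    (∑ j ∈ Finset.Icc 1 n, a j) / n ≤
      c + (H - c) * (({m | 1 ≤ m ∧ m ≤ n ∧ IsHyperbolicTime a c m}.ncard : ℝ) / n) := by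
  classical
  set s : ℕ → ℝ := fun m ↦ ∑ j ∈ Finset.Icc 1 m, (a j - c)
  have hset : {m | 1 ≤ m ∧ m ≤ n ∧ IsHyperbolicTime a c m} =
      ↑{m ∈ Finset.Icc 1 n | IsRecord s m} := by
    ext m
    simp [isHyperbolicTime_iff_isRecord, s, and_assoc]
  have hstep (m : ℕ) : s (m + 1) ≤ s m + (H - c) := by
    simp only [s, Finset.sum_Icc_succ_top (Nat.le_add_left 1 m)]
    linarith [hH (m + 1) (Nat.le_add_left 1 m)]
  have hsn : s n = ∑ j ∈ Finset.Icc 1 n, a j - n * c := by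
    simp [s, Finset.sum_sub_distrib]
  have hbound := le_mul_card_isRecord (sub_nonneg.2 hcH) (by simp [s]) hstep n n le_rfl
  rw [hsn] at hbound
  rw [hset, Set.ncard_coe_finset]
  have hn' : (0 : ℝ) < n := by exact_mod_cast hn
  rw [div_le_iff₀ hn']
  calc ∑ j ∈ Finset.Icc 1 n, a j
      ≤ n * c + (H - c) * #{m ∈ Finset.Icc 1 n | IsRecord s m} := by linarith
    _ = _ := by field_simp

/-- Pliss-type lemma. If `a_j ≤ H` for all `j ≥ 1`, `0 < c₁ < a₀` and the
averages `(1/n) Σ_{j=1}^n a_j` have limsup at least `a₀`, then the frequency of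
`c₁`-hyperbolic times (times `n` with `Σ_{j=n-k+1}^n a_j ≥ c₁ k` for all `1 ≤ k ≤ n`)
has limsup at least `(a₀ - c₁)/(H - c₁)`. -/
theorem pliss_frequency_of_hyperbolic_times
    (a : ℕ → ℝ) (H a₀ c₁ : ℝ) (hH : ∀ j, 1 ≤ j → a j ≤ H)
    (hc₁ : 0 < c₁) (hca : c₁ < a₀)
    (hlimsup : a₀ ≤ limsup (fun n : ℕ => (∑ j ∈ Finset.Icc 1 n, a j) / n) atTop) :
    (a₀ - c₁) / (H - c₁) ≤
      limsup (fun n : ℕ =>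
        (({m | 1 ≤ m ∧ m ≤ n ∧ ∀ k, 1 ≤ k → k ≤ m →
          c₁ * k ≤ ∑ j ∈ Finset.Icc (m - k + 1) m, a j}).ncard : ℝ) / n) atTop := by
  have ha₀ : 0 < a₀ := hc₁.trans hca
  have hcH : c₁ < H := by
    refine hca.trans_le (le_of_le_limsup_of_eventually_le ha₀ hlimsup ?_)
    filter_upwards [eventually_gt_atTop 0] with n hn
    -- at `c = H` the bound reads `average ≤ H`
    simpa using average_le_add_mul_frequency (c := H) hH le_rfl hn
  refine le_limsup_of_le (isBoundedUnder_of_eventually_le (a := 1) (.of_forall fun n ↦ ?_))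
    fun b hb ↦ ?_
  · refine div_le_one_of_le₀ ?_ n.cast_nonneg
    have hsub : {m | 1 ≤ m ∧ m ≤ n ∧ IsHyperbolicTime a c₁ m} ⊆ ↑(Finset.Icc 1 n) :=
      fun m hm ↦ Finset.mem_Icc.2 ⟨hm.1, hm.2.1⟩
    exact_mod_cast (Set.ncard_le_ncard hsub (Finset.finite_toSet _)).trans (by simp)
  · rw [div_le_iff₀ (sub_pos.2 hcH)]
    have hlim := le_of_le_limsup_of_eventually_le ha₀ hlimsup <|
      (hb.and (eventually_gt_atTop 0)).mono fun n ⟨hbn, hn⟩ ↦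
        (average_le_add_mul_frequency hH hcH.le hn).trans <|
          add_le_add_right (mul_le_mul_of_nonneg_left hbn (sub_nonneg.2 hcH.le)) c₁
    linarith
end

section
/- Let M be a compact metric space without isolated points and f : M → M a continuous map admitting a point q ∈ M whose forward orbit {f^n(q) : n ≥ 0} is dense in M. Then for every ε > 0 and every nonempty open set B ⊆ M there exist a point p ∈ B and an integer N₀ ≥ 0 such that the set ⋃_{j=0}^{N₀} f^{−j}({p}) is ε-dense in M, i.e. for every x ∈ M there are 0 ≤ j ≤ N₀ and y ∈ M with f^j(y) = p and dist(x, y) < ε. -/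
/-!
Cover `M` by finitely many `ε`-balls centred at the orbit points `f^[m] q`, `m ≤ N`. Since `M`
has no isolated points, the orbit tail `{f^[n] q : n ≥ N}` is still dense, so some `p = f^[n] q`
with `n ≥ N` lies in `B`. Every `x` is then `ε`-close to a centre `f^[m] q`, which is mapped onto
`p` by `f^[n - m]`.
-/

open Filter Set Topology

theorem DenseRange.exists_forall_exists_le_dist_lt {X : Type*} [PseudoMetricSpace X]
    [CompactSpace X] {u : ℕ → X} (hu : DenseRange u) {ε : ℝ} (hε : 0 < ε) :
    ∃ N, ∀ x, ∃ m ≤ N, dist x (u m) < ε := by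
  have hcover : univ ⊆ ⋃ N, ⋃ m ≤ N, Metric.ball (u m) ε := fun x _ => by
    obtain ⟨_, hy, m, rfl⟩ := Metric.dense_iff.mp hu x ε hε
    exact mem_iUnion.mpr ⟨m, mem_iUnion₂.mpr ⟨m, le_rfl, Metric.mem_ball_comm.mp hy⟩⟩
  have hmono : Monotone fun N => ⋃ m ≤ N, Metric.ball (u m) ε :=
    fun _ _ hNN' => biUnion_mono (fun _ hm => le_trans hm hNN') fun _ _ => le_rfl
  obtain ⟨N, hN⟩ := isCompact_univ.elim_directed_cover _
    (fun _ => isOpen_biUnion fun _ _ => Metric.isOpen_ball) hcover hmono.directed_le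
  refine ⟨N, fun x => ?_⟩
  obtain ⟨m, hm, hx⟩ := mem_iUnion₂.mp (hN (mem_univ x))
  exact ⟨m, hm, hx⟩

theorem DenseRange.frequently_mem_of_isOpen {X : Type*} [TopologicalSpace X] [T1Space X]
    [∀ x : X, NeBot (𝓝[≠] x)] {u : ℕ → X} (hu : DenseRange u) {B : Set X} (hB : IsOpen B)
    (hne : B.Nonempty) : ∃ᶠ n in atTop, u n ∈ B := by
  refine frequently_atTop.mpr fun N => ?_
  have htail : Dense (range u \ u '' Iio N) := hu.sdiff_finite ((finite_Iio N).image u)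
  obtain ⟨_, ⟨⟨n, rfl⟩, hn⟩, hnB⟩ := htail.exists_mem_open hB hne
  exact ⟨n, not_lt.mp fun hlt => hn ⟨n, hlt, rfl⟩, hnB⟩

theorem preimages_eps_dense_of_dense_orbit_general
    {M : Type*} [MetricSpace M] [CompactSpace M]
    (hM : ∀ x : M, (nhdsWithin x {x}ᶜ).NeBot)
    (f : M → M) (q : M)
    (hq : Dense (Set.range fun n : ℕ => f^[n] q)) :
    ∀ ε > (0 : ℝ), ∀ B : Set M, IsOpen B → B.Nonempty →
      ∃ p ∈ B, ∃ N₀ : ℕ, ∀ x : M, ∃ j ≤ N₀, ∃ y : M, f^[j] y = p ∧ dist x y < ε := by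
  intro ε hε B hB hBne
  have : ∀ x : M, NeBot (𝓝[≠] x) := hM
  obtain ⟨N, hcover⟩ := DenseRange.exists_forall_exists_le_dist_lt hq hε
  obtain ⟨n, hNn, hnB⟩ := frequently_atTop.mp (DenseRange.frequently_mem_of_isOpen hq hB hBne) N
  refine ⟨f^[n] q, hnB, n, fun x => ?_⟩
  obtain ⟨m, hmN, hxm⟩ := hcover x
  refine ⟨n - m, Nat.sub_le n m, f^[m] q, ?_, hxm⟩
  rw [← Function.iterate_add_apply, Nat.sub_add_cancel (hmN.trans hNn)]

/-- If `M` is a compact metric space without isolated points and `f` is a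
continuous map with a dense forward orbit, then for every `ε > 0` and every nonempty
open set `B` there are `p ∈ B` and `N₀` such that `⋃_{j ≤ N₀} f^{-j}{p}` is `ε`-dense. -/
theorem preimages_eps_dense_of_dense_orbit
    {M : Type*} [MetricSpace M] [CompactSpace M]
    (hM : ∀ x : M, (nhdsWithin x {x}ᶜ).NeBot)
    (f : M → M) (hf : Continuous f) (q : M)
    (hq : Dense (Set.range fun n : ℕ => f^[n] q)) :
    ∀ ε > (0 : ℝ), ∀ B : Set M, IsOpen B → B.Nonempty →
      ∃ p ∈ B, ∃ N₀ : ℕ, ∀ x : M, ∃ j ≤ N₀, ∃ y : M, f^[j] y = p ∧ dist x y < ε :=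
  preimages_eps_dense_of_dense_orbit_general hM f q hq
end

section
/- Let (X, 𝒜, ν) be a finite measure space, Θ : X → X a measure-preserving map, s : X → [0, ∞) a ν-integrable function, R : X → [0, ∞) a measurable function, and η, ζ > 0. Suppose that for ν-almost every x ∈ X there is r₀(x) ∈ ℕ such that for all integers r ≥ r₀(x): ζ·Σ_{i=0}^{r−1} R(Θ^i x) ≤ η·r + Σ_{i=0}^{r−1} s(Θ^i x). Then R is ν-integrable, and ∫ R dν ≤ (η·ν(X) + ∫ s dν)/ζ. -/
/-!
Truncate `R` at level `M`: the function `φ = ζ · min R M - η - s` is integrable and bounded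
above, and along a.e. orbit its Birkhoff sums are eventually nonpositive. The positive parts of
the Birkhoff averages of `φ` are therefore uniformly bounded and a.e. eventually zero, so by
dominated convergence their integrals tend to `0`; as every Birkhoff average has integral `∫ φ`
by invariance of `ν`, this forces `∫ φ ≤ 0`, i.e. `ζ ∫ min R M ≤ η ν(X) + ∫ s`. Monotone
convergence in `M` transfers the bound to `R`.
-/

open MeasureTheory Filter
open scoped Topology

theorem birkhoffSum_le_nsmul {α M : Type*} [AddCommMonoid M] [PartialOrder M]
    [IsOrderedAddMonoid M] {Θ : α → α} {φ : α → M} {K : M} (hK : ∀ x, φ x ≤ K) (n : ℕ) (x : α) :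
    birkhoffSum Θ φ n x ≤ n • K := by
  simpa [birkhoffSum] using Finset.sum_le_sum fun k (_ : k ∈ Finset.range n) ↦ hK (Θ^[k] x)

namespace MeasureTheory

variable {α : Type*} [MeasurableSpace α] {μ : Measure α}

theorem integrable_min_const_of_nonneg [IsFiniteMeasure μ] {f : α → ℝ} {c : ℝ}
    (hf0 : ∀ x, 0 ≤ f x) (hf : AEStronglyMeasurable f μ) (hc : 0 ≤ c) : Integrable (fun x ↦ min (f x) c) μ :=
  .of_bound (hf.inf aestronglyMeasurable_const) c <| ae_of_all _ fun x ↦ by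
    rw [Real.norm_of_nonneg (le_min (hf0 x) hc)]; exact min_le_right _ _

theorem integrable_and_integral_le_of_integral_min_natCast_le [IsFiniteMeasure μ]
    {f : α → ℝ} {c : ℝ} (hf0 : ∀ x, 0 ≤ f x) (hf : AEStronglyMeasurable f μ)
    (h : ∀ n : ℕ, ∫ x, min (f x) n ∂μ ≤ c) :
    Integrable f μ ∧ ∫ x, f x ∂μ ≤ c := by
  have hmin_int (n : ℕ) : Integrable (fun x ↦ min (f x) n) μ :=
    integrable_min_const_of_nonneg hf0 hf n.cast_nonneg
  have hmin_mono (x : α) : Monotone fun n : ℕ ↦ min (f x) n :=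
    fun _ _ hnm ↦ min_le_min_left _ (Nat.cast_le.2 hnm)
  have hmin_tendsto (x : α) : Tendsto (fun n : ℕ ↦ min (f x) n) atTop (𝓝 (f x)) :=
    tendsto_const_nhds.congr' <| (eventually_ge_atTop ⌈f x⌉₊).mono fun n hn ↦
      (min_eq_left ((Nat.le_ceil _).trans (Nat.cast_le.2 hn))).symm
  have hf_int : Integrable f μ := by
    refine (lintegral_ofReal_ne_top_iff_integrable hf
      (ae_of_all _ hf0)).1 (ne_top_of_le_ne_top (ENNReal.ofReal_ne_top (r := c)) ?_)
    refine le_of_tendsto' (lintegral_tendsto_of_tendsto_of_monotone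
      (fun n ↦ (hmin_int n).aemeasurable.ennreal_ofReal)
      (ae_of_all _ fun x _ _ hnm ↦ ENNReal.ofReal_le_ofReal (hmin_mono x hnm))
      (ae_of_all _ fun x ↦ (ENNReal.continuous_ofReal.tendsto _).comp (hmin_tendsto x)))
      fun n ↦ ?_
    rw [← ofReal_integral_eq_lintegral_ofReal (hmin_int n)
      (ae_of_all _ fun x ↦ le_min (hf0 x) n.cast_nonneg)]
    exact ENNReal.ofReal_le_ofReal (h n)
  exact ⟨hf_int, le_of_tendsto' (integral_tendsto_of_tendsto_of_monotone hmin_int hf_int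
    (ae_of_all _ hmin_mono) (ae_of_all _ hmin_tendsto)) h⟩

variable {Θ : α → α}

theorem MeasurePreserving.integral_birkhoffSum_s8 (hΘ : MeasurePreserving Θ μ μ) {φ : α → ℝ}
    (hφ : Integrable φ μ) (n : ℕ) :
    ∫ x, birkhoffSum Θ φ n x ∂μ = n * ∫ x, φ x ∂μ := by
  have hcomp (k : ℕ) : ∫ x, φ (Θ^[k] x) ∂μ = ∫ x, φ x ∂μ := by
    rw [← integral_map (hΘ.iterate k).measurable.aemeasurable
      (by rw [(hΘ.iterate k).map_eq]; exact hφ.aestronglyMeasurable), (hΘ.iterate k).map_eq]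
  change ∫ x, ∑ k ∈ Finset.range n, φ (Θ^[k] x) ∂μ = _
  rw [integral_finsetSum (f := fun k x ↦ φ (Θ^[k] x)) _
    fun k _ ↦ (hΘ.iterate k).integrable_comp_of_integrable hφ]
  simp [hcomp]

theorem MeasurePreserving.integrable_birkhoffSum_s8 (hΘ : MeasurePreserving Θ μ μ) {φ : α → ℝ}
    (hφ : Integrable φ μ) (n : ℕ) : Integrable (birkhoffSum Θ φ n) μ :=
  integrable_finsetSum (f := fun k x ↦ φ (Θ^[k] x)) _
    fun k _ ↦ (hΘ.iterate k).integrable_comp_of_integrable hφ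

theorem MeasurePreserving.integral_nonpos_of_eventually_birkhoffSum_nonpos [IsFiniteMeasure μ]
    (hΘ : MeasurePreserving Θ μ μ) {φ : α → ℝ} {K : ℝ} (hφ : Integrable φ μ)
    (hK : ∀ x, φ x ≤ K) (h : ∀ᵐ x ∂μ, ∀ᶠ n in atTop, birkhoffSum Θ φ n x ≤ 0) :
    ∫ x, φ x ∂μ ≤ 0 := by
  set F : ℕ → α → ℝ := fun n x ↦ max (birkhoffAverage ℝ Θ φ n x) 0
  have havg_int (n : ℕ) : Integrable (birkhoffAverage ℝ Θ φ n) μ :=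
    (hΘ.integrable_birkhoffSum_s8 hφ n).smul (n : ℝ)⁻¹
  have hF_bound (n : ℕ) (x : α) : ‖F n x‖ ≤ max K 0 := by
    rw [Real.norm_of_nonneg (le_max_right _ _)]
    rcases eq_or_ne n 0 with rfl | hn
    · simp
    · refine max_le_max_right _ ?_
      rw [birkhoffAverage, smul_eq_mul, inv_mul_le_iff₀ (by positivity)]
      simpa using birkhoffSum_le_nsmul hK n x
  have hF_tendsto : Tendsto (fun n ↦ ∫ x, F n x ∂μ) atTop (𝓝 0) := by
    rw [← integral_zero α ℝ]
    refine tendsto_integral_of_dominated_convergence (fun _ ↦ max K 0)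
      (fun n ↦ (havg_int n).pos_part.aestronglyMeasurable) (integrable_const _)
      (fun n ↦ ae_of_all _ (hF_bound n)) ?_
    filter_upwards [h] with x hx
    refine tendsto_const_nhds.congr' <| hx.mono fun n hn ↦ (max_eq_right ?_).symm
    exact smul_nonpos_of_nonneg_of_nonpos (by positivity) hn
  refine ge_of_tendsto hF_tendsto <| (eventually_ne_atTop 0).mono fun n hn ↦ ?_
  calc ∫ x, φ x ∂μ = ∫ x, birkhoffAverage ℝ Θ φ n x ∂μ := by
        simp only [birkhoffAverage]
        rw [integral_smul, hΘ.integral_birkhoffSum_s8 hφ, smul_eq_mul, inv_mul_cancel_left₀]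
        exact_mod_cast hn
    _ ≤ ∫ x, F n x ∂μ := integral_mono (havg_int n) (havg_int n).pos_part fun x ↦ le_max_left _ _

theorem MeasurePreserving.integral_le_of_eventually_birkhoffSum_le [IsFiniteMeasure μ]
    (hΘ : MeasurePreserving Θ μ μ) {f g : α → ℝ} {K : ℝ} (hf : Integrable f μ)
    (hg : Integrable g μ) (hK : ∀ x, f x - g x ≤ K)
    (h : ∀ᵐ x ∂μ, ∀ᶠ n in atTop, birkhoffSum Θ f n x ≤ birkhoffSum Θ g n x) :
    ∫ x, f x ∂μ ≤ ∫ x, g x ∂μ := by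
  rw [← sub_nonpos, ← integral_sub hf hg]
  refine hΘ.integral_nonpos_of_eventually_birkhoffSum_nonpos (hf.sub hg) hK ?_
  filter_upwards [h] with x hx
  exact hx.mono fun n hn ↦ (birkhoffSum_sub Θ f g n x).trans_le (sub_nonpos.2 hn)

end MeasureTheory

theorem integrable_return_time_of_orbitwise_bound_general
    {X : Type*} [MeasurableSpace X] (ν : Measure X) [IsFiniteMeasure ν]
    (Θ : X → X) (hΘ : MeasurePreserving Θ ν ν)
    (s : X → ℝ) (hs0 : ∀ x, 0 ≤ s x) (hsint : Integrable s ν)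
    (R : X → ℝ) (hR0 : ∀ x, 0 ≤ R x) (hRmeas : Measurable R)
    (η ζ : ℝ) (hζ : 0 < ζ)
    (hyp : ∀ᵐ x ∂ν, ∃ r₀ : ℕ, ∀ r : ℕ, r₀ ≤ r →
      ζ * ∑ i ∈ Finset.range r, R (Θ^[i] x) ≤ η * r + ∑ i ∈ Finset.range r, s (Θ^[i] x)) :
    Integrable R ν ∧ ∫ x, R x ∂ν ≤ (η * (ν Set.univ).toReal + ∫ x, s x ∂ν) / ζ := by
  refine integrable_and_integral_le_of_integral_min_natCast_le hR0
    hRmeas.aestronglyMeasurable fun M ↦ ?_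
  have hR_M : Integrable (fun x ↦ min (R x) M) ν :=
    integrable_min_const_of_nonneg hR0 hRmeas.aestronglyMeasurable M.cast_nonneg
  have hbound (x : X) : ζ * min (R x) M - (η + s x) ≤ ζ * M - η := by
    linarith [mul_le_mul_of_nonneg_left (min_le_right (R x) M) hζ.le, hs0 x]
  have key : ∫ x, ζ * min (R x) M ∂ν ≤ ∫ x, η + s x ∂ν := by
    refine hΘ.integral_le_of_eventually_birkhoffSum_le (hR_M.const_mul ζ)
      ((integrable_const η).add hsint) hbound ?_
    filter_upwards [hyp] with x ⟨r₀, hr₀⟩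
    refine eventually_atTop.2 ⟨r₀, fun r hr ↦ ?_⟩
    have hmin : ∑ i ∈ Finset.range r, min (R (Θ^[i] x)) M ≤ ∑ i ∈ Finset.range r, R (Θ^[i] x) :=
      Finset.sum_le_sum fun i _ ↦ min_le_left _ _
    simp only [birkhoffSum, Finset.sum_add_distrib, ← Finset.mul_sum, Finset.sum_const,
      Finset.card_range, nsmul_eq_mul]
    linarith [hr₀ r hr, mul_le_mul_of_nonneg_left hmin hζ.le]
  rw [integral_const_mul, integral_add (integrable_const η) hsint, integral_const, smul_eq_mul,
    measureReal_def] at key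
  rw [le_div_iff₀ hζ]
  linarith

/-- If along `ν`-a.e. orbit of a measure-preserving map `Θ` the Birkhoff
sums of `R` are eventually dominated via `ζ·Σ R∘Θ^i ≤ η·r + Σ s∘Θ^i` with `s`
integrable, then `R` is `ν`-integrable and `∫ R dν ≤ (η·ν(X) + ∫ s dν)/ζ`. -/
theorem integrable_return_time_of_orbitwise_bound
    {X : Type*} [MeasurableSpace X] (ν : Measure X) [IsFiniteMeasure ν]
    (Θ : X → X) (hΘ : MeasurePreserving Θ ν ν)
    (s : X → ℝ) (hs0 : ∀ x, 0 ≤ s x) (hsint : Integrable s ν)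
    (R : X → ℝ) (hR0 : ∀ x, 0 ≤ R x) (hRmeas : Measurable R)
    (η ζ : ℝ) (hη : 0 < η) (hζ : 0 < ζ)
    (hyp : ∀ᵐ x ∂ν, ∃ r₀ : ℕ, ∀ r : ℕ, r₀ ≤ r →
      ζ * ∑ i ∈ Finset.range r, R (Θ^[i] x) ≤ η * r + ∑ i ∈ Finset.range r, s (Θ^[i] x)) :
    Integrable R ν ∧ ∫ x, R x ∂ν ≤ (η * (ν Set.univ).toReal + ∫ x, s x ∂ν) / ζ :=
  integrable_return_time_of_orbitwise_bound_general ν Θ hΘ s hs0 hsint R hR0 hRmeas η ζ hζ hyp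
end

section
/- In the tower setting, assume there is a constant K₁ < ∞ such that for P-almost every ω the measure ν_ω is absolutely continuous with respect to m with density dν_ω/dm ≤ K₁, and assume that for P-almost every ω and every measurable B ⊆ Δ one has ν_ω(B) = Σ_{n=1}^{∞} ν_{σ^{−n}ω}({x ∈ Δ : R(σ^{−n}ω, x) = n and F(σ^{−n}ω, x) ∈ B}). Then the measure ν on Ω × Δ defined by ν(A) = ∫_Ω ν_ω({x : (ω, x) ∈ A}) dP(ω) is a finite measure with ν(Ω × Δ) ≤ K₁·m(Δ), ν is absolutely continuous with respect to the product measure P ⊗ m, and ν is Θ-invariant: Θ_*ν = ν. -/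
open MeasureTheory ProbabilityTheory Filter Set
open scoped ENNReal NNReal

/-!
The density bound gives `ν = P ⊗ₘ κ ≤ K₁ • (P ⊗ m)`, which yields both the mass bound and
absolute continuity. For invariance, split `Θ⁻¹ s` according to the value `n + 1` of the return
time: on that level `Θ` is `(ω, x) ↦ (σ^[n+1] ω, F ω x)`. Substituting
`ω ↦ σ⁻¹^[n+1] ω` level by level (legitimate since `σ` preserves `P`) turns `ν (Θ⁻¹ s)` into
the integral over `P` of the right-hand side of the fixed-point equation for the slice of `s`
at `ω`, that is into `ν s`.
-/

namespace MeasureTheory.Measure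

variable {α β : Type*} [MeasurableSpace α] [MeasurableSpace β]

lemma compProd_le_smul_prod {μ : Measure α} [SFinite μ] {κ : Kernel α β} [IsSFiniteKernel κ]
    {m : Measure β} [SFinite m] {c : ℝ≥0∞} (h : ∀ᵐ a ∂μ, κ a ≤ c • m) :
    μ ⊗ₘ κ ≤ c • μ.prod m := by
  refine Measure.le_iff.2 fun s hs => ?_
  rw [compProd_apply hs, smul_apply, prod_apply hs, smul_eq_mul,
    ← lintegral_const_mul _ (measurable_measure_prodMk_left hs)]
  exact lintegral_mono_ae (h.mono fun a ha => ha _)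

end MeasureTheory.Measure

lemma MeasureTheory.lintegral_tsum_comp_measurePreserving {α β : Type*} [MeasurableSpace α]
    [MeasurableSpace β] {μ : Measure α} {ν : Measure β} {T : ℕ → α → β} {g : ℕ → β → ℝ≥0∞}
    (hT : ∀ n, MeasurePreserving (T n) μ ν) (hg : ∀ n, Measurable (g n)) :
    ∫⁻ a, ∑' n, g n (T n a) ∂μ = ∫⁻ b, ∑' n, g n b ∂ν := by
  rw [lintegral_tsum (f := fun n a => g n (T n a))
      fun n => ((hg n).comp (hT n).measurable).aemeasurable,
    lintegral_tsum fun n => (hg n).aemeasurable]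
  exact tsum_congr fun n => (hT n).lintegral_comp (hg n)

section Tower

variable {Ω Δ : Type*}

def towerMap (σ : Ω → Ω) (R : Ω → Δ → ℕ) (F : Ω → Δ → Δ) (p : Ω × Δ) : Ω × Δ :=
  (σ^[R p.1 p.2] p.1, F p.1 p.2)

def towerLevel (σ : Ω → Ω) (R : Ω → Δ → ℕ) (F : Ω → Δ → Δ) (s : Set (Ω × Δ)) (n : ℕ) :
    Set (Ω × Δ) :=
  {p | R p.1 p.2 = n + 1 ∧ (σ^[n + 1] p.1, F p.1 p.2) ∈ s}

variable {σ : Ω → Ω} {R : Ω → Δ → ℕ} {F : Ω → Δ → Δ}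

lemma towerMap_preimage_eq_iUnion (hR1 : ∀ ω x, 1 ≤ R ω x) (s : Set (Ω × Δ)) :
    towerMap σ R F ⁻¹' s = ⋃ n, towerLevel σ R F s n := by
  ext ⟨ω, x⟩
  simp only [mem_preimage, mem_iUnion, towerMap, towerLevel, mem_ofPred_eq]
  constructor
  · intro h
    exact ⟨R ω x - 1, by have := hR1 ω x; omega, by rwa [Nat.sub_add_cancel (hR1 ω x)]⟩
  · rintro ⟨n, hn, h⟩
    rwa [hn]

lemma pairwise_disjoint_towerLevel (s : Set (Ω × Δ)) :
    Pairwise (Function.onFun Disjoint (towerLevel σ R F s)) := fun i j hij =>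
  disjoint_left.2 fun _ hi hj => hij (by simpa using hi.1.symm.trans hj.1)

variable [MeasurableSpace Ω] [MeasurableSpace Δ]

lemma measurable_towerMap (hσ : Measurable σ) (hR : Measurable fun p : Ω × Δ => R p.1 p.2)
    (hF : Measurable fun p : Ω × Δ => F p.1 p.2) : Measurable (towerMap σ R F) :=
  ((measurable_from_prod_countable_left (f := fun q : Ω × ℕ => σ^[q.2] q.1)
    hσ.iterate).comp (measurable_fst.prodMk hR)).prodMk hF

lemma measurableSet_towerLevel (hσ : Measurable σ) (hR : Measurable fun p : Ω × Δ => R p.1 p.2)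
    (hF : Measurable fun p : Ω × Δ => F p.1 p.2) {s : Set (Ω × Δ)} (hs : MeasurableSet s)
    (n : ℕ) : MeasurableSet (towerLevel σ R F s n) :=
  (hR (measurableSet_singleton _)).inter
    (((hσ.iterate _).comp measurable_fst).prodMk hF hs)

lemma measure_slice_towerMap_preimage (hσ : Measurable σ)
    (hR : Measurable fun p : Ω × Δ => R p.1 p.2) (hR1 : ∀ ω x, 1 ≤ R ω x)
    (hF : Measurable fun p : Ω × Δ => F p.1 p.2) {s : Set (Ω × Δ)} (hs : MeasurableSet s)
    (μ : Measure Δ) (ω : Ω) :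
    μ (Prod.mk ω ⁻¹' (towerMap σ R F ⁻¹' s)) = ∑' n, μ (Prod.mk ω ⁻¹' towerLevel σ R F s n) := by
  rw [towerMap_preimage_eq_iUnion hR1, preimage_iUnion]
  exact measure_iUnion (fun i j hij => (pairwise_disjoint_towerLevel s hij).preimage _)
    fun n => measurable_prodMk_left (measurableSet_towerLevel hσ hR hF hs n)

theorem map_towerMap_compProd {P : Measure Ω} [SFinite P] (e : Ω ≃ᵐ Ω)
    (he : MeasurePreserving e P P) (hR : Measurable fun p : Ω × Δ => R p.1 p.2)
    (hR1 : ∀ ω x, 1 ≤ R ω x) (hF : Measurable fun p : Ω × Δ => F p.1 p.2)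
    (κ : Kernel Ω Δ) [IsSFiniteKernel κ]
    (hfix : ∀ᵐ ω ∂P, ∀ B : Set Δ, MeasurableSet B →
      κ ω B = ∑' n : ℕ, κ (e.symm^[n + 1] ω)
        {x | R (e.symm^[n + 1] ω) x = n + 1 ∧ F (e.symm^[n + 1] ω) x ∈ B}) :
    (P ⊗ₘ κ).map (towerMap e R F) = P ⊗ₘ κ := by
  ext s hs
  have hΘ := measurable_towerMap e.measurable hR hF
  have hlevel := measurableSet_towerLevel e.measurable hR hF hs
  rw [Measure.map_apply hΘ hs, Measure.compProd_apply (hΘ hs), Measure.compProd_apply hs]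
  calc ∫⁻ ω, κ ω (Prod.mk ω ⁻¹' (towerMap e R F ⁻¹' s)) ∂P
      = ∫⁻ ω, ∑' n, κ ω (Prod.mk ω ⁻¹' towerLevel e R F s n) ∂P :=
        lintegral_congr fun ω => measure_slice_towerMap_preimage e.measurable hR hR1 hF hs (κ ω) ω
    _ = ∫⁻ ω, ∑' n, κ (e.symm^[n + 1] ω)
          (Prod.mk (e.symm^[n + 1] ω) ⁻¹' towerLevel e R F s n) ∂P :=
        (lintegral_tsum_comp_measurePreserving (fun n => he.symm.iterate (n + 1))
          fun n => Kernel.measurable_kernel_prodMk_left (hlevel n)).symm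
    _ = ∫⁻ ω, κ ω (Prod.mk ω ⁻¹' s) ∂P := by
        refine lintegral_congr_ae ?_
        filter_upwards [hfix] with ω hω
        rw [hω _ (measurable_prodMk_left hs)]
        refine tsum_congr fun n => ?_
        have hret := Function.LeftInverse.iterate e.apply_symm_apply (n + 1) ω
        congr 1
        ext x
        simp only [towerLevel, mem_preimage, mem_ofPred_eq, hret]

end Tower

/-- In the tower setting, if the kernel `κ` (the family `ν_ω`) has densities
bounded by `K₁` with respect to `m` and is a fixed point of the induced transfer operator,
then the measure `ν = P ⊗ₘ κ` on `Ω × Δ` is finite with mass at most `K₁·m(Δ)`,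
absolutely continuous w.r.t. `P ⊗ m`, and invariant under the tower map `Θ`. -/
theorem tower_measure_finite_ac_invariant
    {Ω Δ : Type*} [MeasurableSpace Ω] [MeasurableSpace Δ]
    (P : Measure Ω) [IsProbabilityMeasure P]
    (m : Measure Δ) [IsFiniteMeasure m]
    (σ σinv : Ω → Ω) (hσ : Measurable σ) (hσinv : Measurable σinv)
    (hinv1 : ∀ ω, σinv (σ ω) = ω) (hinv2 : ∀ ω, σ (σinv ω) = ω)
    (hσP : MeasurePreserving σ P P)
    (R : Ω → Δ → ℕ) (hR : Measurable fun p : Ω × Δ => R p.1 p.2) (hR1 : ∀ ω x, 1 ≤ R ω x)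
    (F : Ω → Δ → Δ) (hF : Measurable fun p : Ω × Δ => F p.1 p.2)
    (κ : Kernel Ω Δ) [IsFiniteKernel κ]
    (K₁ : ℝ≥0)
    (hdens : ∀ᵐ ω ∂P, κ ω ≤ (K₁ : ℝ≥0∞) • m)
    (hfix : ∀ᵐ ω ∂P, ∀ B : Set Δ, MeasurableSet B →
      κ ω B = ∑' n : ℕ, κ (σinv^[n + 1] ω)
        {x | R (σinv^[n + 1] ω) x = n + 1 ∧ F (σinv^[n + 1] ω) x ∈ B}) :
    (P.compProd κ) Set.univ ≤ (K₁ : ℝ≥0∞) * m Set.univ ∧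
    IsFiniteMeasure (P.compProd κ) ∧
    (P.compProd κ) ≪ P.prod m ∧
    Measure.map (fun p : Ω × Δ => (σ^[R p.1 p.2] p.1, F p.1 p.2)) (P.compProd κ) =
      P.compProd κ := by
  have hle := Measure.compProd_le_smul_prod hdens
  let e : Ω ≃ᵐ Ω := ⟨⟨σ, σinv, hinv1, hinv2⟩, hσ, hσinv⟩
  refine ⟨?_, inferInstance, Measure.absolutelyContinuous_of_le_smul hle,
    map_towerMap_compProd e hσP hR hR1 hF κ hfix⟩
  calc (P ⊗ₘ κ) univ ≤ ((K₁ : ℝ≥0∞) • P.prod m) univ := hle univ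
    _ = K₁ * m univ := by
      rw [Measure.smul_apply, ← univ_prod_univ, Measure.prod_prod, measure_univ, one_mul,
        smul_eq_mul]
end

section
/- In the random tower setting, assume that for P-almost every ω and every measurable B ⊆ Δ one has ν_ω(B) = Σ_{n=1}^{∞} ν_{σ^{−n}ω}({x ∈ Δ : R(σ^{−n}ω, x) = n and F(σ^{−n}ω, x) ∈ B}), where F(ω, x) = g_ω^{R(ω,x)}(x). For each ω define the measure μ_ω on M by μ_ω = Σ_{j=0}^{∞} (g_{σ^{−j}ω}^{j})_* ( ν_{σ^{−j}ω} restricted to {x ∈ Δ : R(σ^{−j}ω, x) > j} ). Then for P-almost every ω, (g_ω)_* μ_ω = μ_{σω}. -/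
/-!
Pushing the `j`-th floor `(g^j_{σ^{-j}ω})_* (ν_{σ^{-j}ω}|{R > j})` of `μ_ω` forward by `g_ω` gives
the part of floor `j + 1` of `μ_{σω}` where the tower has not yet returned (`R > j + 1`), plus the
mass returning to `Δ` exactly at time `j + 1`. Summed over `j`, the returning masses form the
induced transfer operator applied to `ν`, which is `ν_{σω}|Δ` by the fixed-point hypothesis,
and this is the bottom floor of `μ_{σω}`.
-/

open MeasureTheory Set

/-- Random iterates: `randIter σ g n ω = g_{σ^{n-1}ω} ∘ ⋯ ∘ g_{σω} ∘ g_ω`. -/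
def randIter {Ω M : Type*} (σ : Ω → Ω) (g : Ω → M → M) : ℕ → Ω → M → M
  | 0, _, x => x
  | n + 1, ω, x => g (σ^[n] ω) (randIter σ g n ω x)

theorem MeasureTheory.Measure.sum_nat_eq_zero_add {α : Type*} [MeasurableSpace α]
    (μ : ℕ → Measure α) : Measure.sum μ = μ 0 + Measure.sum fun n => μ (n + 1) := by
  ext s hs
  simp only [Measure.add_apply, Measure.sum_apply _ hs]
  exact tsum_eq_zero_add' ENNReal.summable

section RandomTower

variable {Ω M : Type*} [MeasurableSpace M] {σ : Ω → Ω} {g : Ω → M → M} {R : Ω → M → ℕ}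
  {Δ : Set M} {ν : Ω → Measure M}

theorem measurable_randIter (hg : ∀ ω, Measurable (g ω)) (n : ℕ) (ω : Ω) :
    Measurable (randIter σ g n ω) := by
  induction n with
  | zero => exact measurable_id
  | succ n ih => exact (hg _).comp ih

variable (σ g R Δ ν) in
/-- The `j`-th floor of the tower with base fibre `ω`, pushed down to `M`; `μ_ω` sums these over
the bases `σ^{-j}ω`. -/
noncomputable def towerFloor (j : ℕ) (ω : Ω) : Measure M :=
  Measure.map (randIter σ g j ω) ((ν ω).restrict {x | x ∈ Δ ∧ j < R ω x})

variable (σ g R Δ ν) in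
noncomputable def projectedMeasure (σinv : Ω → Ω) (ω : Ω) : Measure M :=
  Measure.sum fun j => towerFloor σ g R Δ ν j (σinv^[j] ω)

theorem towerFloor_zero (hR1 : ∀ ω, ∀ x ∈ Δ, 1 ≤ R ω x) (ω : Ω) :
    towerFloor σ g R Δ ν 0 ω = (ν ω).restrict Δ := by
  have hfloor : {x | x ∈ Δ ∧ 0 < R ω x} = Δ := by
    ext x
    exact ⟨And.left, fun hx => ⟨hx, hR1 ω x hx⟩⟩
  rw [towerFloor, hfloor]
  exact Measure.map_id

theorem map_towerFloor (hΔ : MeasurableSet Δ) (hg : ∀ ω, Measurable (g ω))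
    (hR : ∀ ω, Measurable (R ω)) (j : ℕ) (ω : Ω) :
    Measure.map (g (σ^[j] ω)) (towerFloor σ g R Δ ν j ω) =
      Measure.map (randIter σ g (j + 1) ω) ((ν ω).restrict {x | x ∈ Δ ∧ R ω x = j + 1}) +
        towerFloor σ g R Δ ν (j + 1) ω := by
  have hsplit : {x | x ∈ Δ ∧ j < R ω x} =
      {x | x ∈ Δ ∧ R ω x = j + 1} ∪ {x | x ∈ Δ ∧ j + 1 < R ω x} := by
    ext x
    simp only [mem_ofPred_eq, mem_union, ← and_or_left]
    exact and_congr_right fun _ => by omega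
  have hdisj : Disjoint {x | x ∈ Δ ∧ R ω x = j + 1} {x | x ∈ Δ ∧ j + 1 < R ω x} :=
    disjoint_left.2 fun x hx hx' => by simp only [mem_ofPred_eq] at hx hx'; omega
  have hmeas : MeasurableSet {x | x ∈ Δ ∧ j + 1 < R ω x} :=
    hΔ.inter (hR ω measurableSet_Ioi)
  have hstep : Measurable (g (σ^[j] ω) ∘ randIter σ g j ω) :=
    (hg _).comp (measurable_randIter hg j ω)
  rw [towerFloor, towerFloor, Measure.map_map (hg _) (measurable_randIter hg j ω), hsplit,
    Measure.restrict_union hdisj hmeas, Measure.map_add _ _ hstep]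
  rfl

theorem sum_map_restrict_return_eq (hΔ : MeasurableSet Δ) (hg : ∀ ω, Measurable (g ω))
    (hRΔ : ∀ ω, ∀ x ∈ Δ, randIter σ g (R ω x) ω x ∈ Δ) (ρ : Measure M) (ω : ℕ → Ω)
    (hρ : ∀ B : Set M, MeasurableSet B → B ⊆ Δ →
      ρ B = ∑' n : ℕ, ν (ω n)
        {x | x ∈ Δ ∧ R (ω n) x = n + 1 ∧ randIter σ g (R (ω n) x) (ω n) x ∈ B}) :
    (Measure.sum fun n => Measure.map (randIter σ g (n + 1) (ω n))
      ((ν (ω n)).restrict {x | x ∈ Δ ∧ R (ω n) x = n + 1})) = ρ.restrict Δ := by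
  ext B hB
  rw [Measure.sum_apply _ hB, Measure.restrict_apply hB, hρ _ (hB.inter hΔ) inter_subset_right]
  refine tsum_congr fun n => ?_
  rw [Measure.map_apply (measurable_randIter hg _ _) hB,
    Measure.restrict_apply (measurable_randIter hg _ _ hB)]
  congr 1
  ext x
  simp only [mem_inter_iff, mem_preimage, mem_ofPred_eq]
  constructor
  · rintro ⟨hxB, hxΔ, hRx⟩
    exact ⟨hxΔ, hRx, hRx ▸ hxB, hRx ▸ hRΔ _ x hxΔ⟩
  · rintro ⟨hxΔ, hRx, hxB, -⟩
    exact ⟨hRx ▸ hxB, hxΔ, hRx⟩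

end RandomTower

theorem projected_measures_quasi_invariant_general
    {Ω M : Type*} [MeasurableSpace Ω] [MeasurableSpace M]
    (P : Measure Ω)
    (σ σinv : Ω → Ω)
    (hinv1 : ∀ ω, σinv (σ ω) = ω) (hinv2 : ∀ ω, σ (σinv ω) = ω)
    (hσP : MeasurePreserving σ P P)
    (Δ : Set M) (hΔ : MeasurableSet Δ)
    (g : Ω → M → M) (hg : Measurable fun p : Ω × M => g p.1 p.2)
    (R : Ω → M → ℕ) (hRmeas : Measurable fun p : Ω × M => R p.1 p.2)
    (hR1 : ∀ ω, ∀ x ∈ Δ, 1 ≤ R ω x)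
    (hRΔ : ∀ ω, ∀ x ∈ Δ, randIter σ g (R ω x) ω x ∈ Δ)
    (ν : Ω → Measure M)
    (hfix : ∀ᵐ ω ∂P, ∀ B : Set M, MeasurableSet B → B ⊆ Δ →
      ν ω B = ∑' n : ℕ, ν (σinv^[n + 1] ω)
        {x | x ∈ Δ ∧ R (σinv^[n + 1] ω) x = n + 1 ∧
          randIter σ g (R (σinv^[n + 1] ω) x) (σinv^[n + 1] ω) x ∈ B}) :
    ∀ᵐ ω ∂P,
      Measure.map (g ω)
        (Measure.sum fun j : ℕ =>
          Measure.map (randIter σ g j (σinv^[j] ω))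
            ((ν (σinv^[j] ω)).restrict {x | x ∈ Δ ∧ j < R (σinv^[j] ω) x})) =
      Measure.sum fun j : ℕ =>
        Measure.map (randIter σ g j (σinv^[j] (σ ω)))
          ((ν (σinv^[j] (σ ω))).restrict {x | x ∈ Δ ∧ j < R (σinv^[j] (σ ω)) x}) := by
  have hgω : ∀ ω, Measurable (g ω) := fun ω => hg.comp measurable_prodMk_left
  have hRω : ∀ ω, Measurable (R ω) := fun ω => hRmeas.comp measurable_prodMk_left
  filter_upwards [hσP.quasiMeasurePreserving.tendsto_ae.eventually hfix] with ω hfixσω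
  have hshift : ∀ j, σinv^[j + 1] (σ ω) = σinv^[j] ω := fun j => by
    rw [Function.iterate_succ_apply, hinv1]
  simp only [hshift] at hfixσω
  change Measure.map (g ω) (projectedMeasure σ g R Δ ν σinv ω) =
    projectedMeasure σ g R Δ ν σinv (σ ω)
  calc Measure.map (g ω) (projectedMeasure σ g R Δ ν σinv ω)
      = Measure.sum fun j => Measure.map (g (σ^[j] (σinv^[j] ω)))
          (towerFloor σ g R Δ ν j (σinv^[j] ω)) := by
        simp only [Function.LeftInverse.iterate hinv2 _ ω]
        exact Measure.map_sum (hgω ω).aemeasurable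
    _ = (ν (σ ω)).restrict Δ +
          Measure.sum fun j => towerFloor σ g R Δ ν (j + 1) (σinv^[j] ω) := by
        simp only [map_towerFloor hΔ hgω hRω, ← Measure.sum_add_sum]
        rw [sum_map_restrict_return_eq hΔ hgω hRΔ _ _ hfixσω]
    _ = projectedMeasure σ g R Δ ν σinv (σ ω) := by
        rw [eq_comm, projectedMeasure, Measure.sum_nat_eq_zero_add, Function.iterate_zero_apply,
          towerFloor_zero hR1]
        simp only [hshift]

/-- In the random tower setting, if the kernel `(ν_ω)` is a fixed point of
the induced transfer operator, then the projected measures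
`μ_ω = Σ_j (g_{σ^{-j}ω}^j)_* (ν_{σ^{-j}ω}|{R > j})` are quasi-invariant:
`(g_ω)_* μ_ω = μ_{σω}` for `P`-a.e. `ω`. -/
theorem projected_measures_quasi_invariant
    {Ω M : Type*} [MeasurableSpace Ω] [MeasurableSpace M]
    (P : Measure Ω) [IsProbabilityMeasure P]
    (σ σinv : Ω → Ω) (hσ : Measurable σ) (hσinv : Measurable σinv)
    (hinv1 : ∀ ω, σinv (σ ω) = ω) (hinv2 : ∀ ω, σ (σinv ω) = ω)
    (hσP : MeasurePreserving σ P P)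
    (Δ : Set M) (hΔ : MeasurableSet Δ)
    (g : Ω → M → M) (hg : Measurable fun p : Ω × M => g p.1 p.2)
    (R : Ω → M → ℕ) (hRmeas : Measurable fun p : Ω × M => R p.1 p.2)
    (hR1 : ∀ ω, ∀ x ∈ Δ, 1 ≤ R ω x)
    (hRΔ : ∀ ω, ∀ x ∈ Δ, randIter σ g (R ω x) ω x ∈ Δ)
    (ν : Ω → Measure M) (hνfin : ∀ ω, IsFiniteMeasure (ν ω))
    (hνΔ : ∀ ω, ν ω Δᶜ = 0)
    (hνmeas : ∀ B : Set M, MeasurableSet B → Measurable fun ω => ν ω B)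
    (hfix : ∀ᵐ ω ∂P, ∀ B : Set M, MeasurableSet B → B ⊆ Δ →
      ν ω B = ∑' n : ℕ, ν (σinv^[n + 1] ω)
        {x | x ∈ Δ ∧ R (σinv^[n + 1] ω) x = n + 1 ∧
          randIter σ g (R (σinv^[n + 1] ω) x) (σinv^[n + 1] ω) x ∈ B}) :
    ∀ᵐ ω ∂P,
      Measure.map (g ω)
        (Measure.sum fun j : ℕ =>
          Measure.map (randIter σ g j (σinv^[j] ω))
            ((ν (σinv^[j] ω)).restrict {x | x ∈ Δ ∧ j < R (σinv^[j] ω) x})) =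
      Measure.sum fun j : ℕ =>
        Measure.map (randIter σ g j (σinv^[j] (σ ω)))
          ((ν (σinv^[j] (σ ω))).restrict {x | x ∈ Δ ∧ j < R (σinv^[j] (σ ω)) x}) :=
  projected_measures_quasi_invariant_general P σ σinv hinv1 hinv2 hσP Δ hΔ g hg R hRmeas hR1 hRΔ ν
    hfix
end

section
/- Let (T, 𝒯, θ) be a probability space, M a measurable space, and f : T × M → M measurable. Let Ω = T^ℤ carry the product measure P = θ^ℤ and the two-sided shift σ defined by (σω)_i = ω_{i+1}. Let ω ↦ μ_ω be a kernel of finite measures on M (ω ↦ μ_ω(B) measurable for each measurable B ⊆ M) such that: (1) ω ↦ μ_ω is measurable with respect to the sub-σ-algebra of Ω generated by the coordinates ω_i with i < 0; (2) ∫_Ω μ_ω(M) dP(ω) < ∞; and (3) for P-almost every ω, (f(ω_0, ·))_* μ_ω = μ_{σω}. Then the measure μ on M defined by μ(B) = ∫_Ω μ_ω(B) dP(ω) satisfies: the pushforward of θ ⊗ μ under the map (t, x) ↦ f(t, x) equals μ; in particular, after normalization μ is a stationary measure for the random system (f, θ). -/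
/-!
Write `ν = ∫ μ_ω dP(ω)`. Since `μ_ω` only depends on the past of `ω`, it does not change when
the coordinate `ω₀` is resampled independently, and resampling one coordinate preserves `θ^ℤ`.
Hence integrating `μ_ω (f_t⁻¹ B)` against `θ(dt) ⊗ P(dω)`, which gives `(θ ⊗ ν)` of the preimage
of `B` by Tonelli, is the same as integrating `μ_ω (f_{ω₀}⁻¹ B)` against `P`. Quasi-invariance
turns the latter into `∫ μ_{σω}(B) dP`, which is `ν(B)` because `σ` preserves `θ^ℤ`.
-/

open MeasureTheory Set
open scoped ENNReal

namespace ProbabilityTheory.Kernel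

variable {α β : Type*} [MeasurableSpace α] [MeasurableSpace β]

theorem isSFiniteKernel_of_isFiniteMeasure (κ : Kernel α β) [∀ a, IsFiniteMeasure (κ a)] :
    IsSFiniteKernel κ := by
  classical
  set D := disjointed fun n : ℕ => {a | κ a univ ≤ n}
  have hD : ∀ n, MeasurableSet (D n) := MeasurableSet.disjointed fun n =>
    measurableSet_le (κ.measurable_coe .univ) measurable_const
  have hfin n : IsFiniteKernel (piecewise (hD n) κ 0) :=
    ⟨⟨n, ENNReal.natCast_lt_top n, fun a => by
      rw [piecewise_apply']
      split_ifs with ha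
      · exact disjointed_subset _ n ha
      · simp⟩⟩
  refine ⟨⟨fun n => piecewise (hD n) κ 0, hfin, ?_⟩⟩
  ext a t ht
  obtain ⟨n, hn⟩ : ∃ n, a ∈ D n := by
    rw [← mem_iUnion, iUnion_disjointed]
    obtain ⟨n, hn⟩ := ENNReal.exists_nat_gt (measure_ne_top (κ a) univ)
    exact mem_iUnion.2 ⟨n, hn.le⟩
  rw [sum_apply' _ _ ht, tsum_eq_single n fun k hk => ?_, piecewise_apply', if_pos hn]
  rw [piecewise_apply', if_neg fun hk' => (disjoint_disjointed _ hk).ne_of_mem hk' hn rfl]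
  rfl

theorem measurable_measure_preimage_uncurry {T γ : Type*} [MeasurableSpace T]
    [MeasurableSpace γ] (κ : Kernel α β) [IsSFiniteKernel κ] {f : T → β → γ}
    (hf : Measurable (Function.uncurry f)) {B : Set γ} (hB : MeasurableSet B) :
    Measurable fun p : T × α => κ p.2 (f p.1 ⁻¹' B) :=
  measurable_kernel_prodMk_left (κ := prodMkLeft T κ) (t := {q | f q.1.1 q.2 ∈ B})
    (hf.comp (f := fun q : (T × α) × β => (q.1.1, q.2)) (by fun_prop) hB)

end ProbabilityTheory.Kernel

namespace MeasureTheory.Measure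

theorem eq_of_eq_on_coordinates {ι T M : Type*} [MeasurableSpace T] [MeasurableSpace M]
    {p : ι → Prop} {μ : (ι → T) → Measure M}
    (hμ : ∀ B : Set M, MeasurableSet B →
      Measurable[MeasurableSpace.comap (fun (ω : ι → T) (i : {i : ι // p i}) => ω i.1)
        MeasurableSpace.pi] (fun ω => μ ω B))
    {ω ω' : ι → T} (h : ∀ i, p i → ω i = ω' i) : μ ω = μ ω' :=
  ext fun B hB => (hμ B hB).factorsThrough (funext fun i => h i i.2)

variable {ι : Type*} [DecidableEq ι] {X : ι → Type*} [∀ i, MeasurableSpace (X i)]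
  (μ : ∀ i, Measure (X i)) [∀ i, IsProbabilityMeasure (μ i)]

theorem infinitePi_map_update (j : ι) :
    ((μ j).prod (infinitePi μ)).map (fun p => Function.update p.2 j p.1) = infinitePi μ := by
  refine eq_infinitePi μ fun s t ht => ?_
  rw [map_apply (by fun_prop) (.pi s.countable_toSet fun i _ => ht i)]
  by_cases hj : j ∈ s
  · have : (fun p : X j × (∀ i, X i) => Function.update p.2 j p.1) ⁻¹' (s : Set ι).pi t =
        t j ×ˢ (s.erase j : Set ι).pi t := by
      ext ⟨x, ω⟩
      simp only [mem_preimage, Set.mem_pi, mem_prod, Finset.coe_erase, Set.mem_sdiff,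
        Finset.mem_coe, mem_singleton_iff]
      constructor
      · intro h
        exact ⟨by simpa using h j hj, fun i ⟨hi, hij⟩ => by simpa [hij] using h i hi⟩
      · rintro ⟨hx, h⟩ i hi
        rcases eq_or_ne i j with rfl | hij
        · simpa using hx
        · simpa [hij] using h i ⟨hi, hij⟩
    rw [this, prod_prod, infinitePi_pi μ fun i _ => ht i,
      Finset.mul_prod_erase s (fun i => μ i (t i)) hj]
  · have : (fun p : X j × (∀ i, X i) => Function.update p.2 j p.1) ⁻¹' (s : Set ι).pi t =
        univ ×ˢ (s : Set ι).pi t := by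
      ext ⟨x, ω⟩
      simp only [mem_preimage, Set.mem_pi, mem_prod, mem_univ, true_and, Finset.mem_coe]
      refine forall₂_congr fun i hi => ?_
      rw [Function.update_of_ne (ne_of_mem_of_not_mem hi hj)]
    rw [this, prod_prod, infinitePi_pi μ fun i _ => ht i, measure_univ, one_mul]

theorem lintegral_infinitePi_eval_prodMk (j : ι) {g : X j × (∀ i, X i) → ℝ≥0∞}
    (hg : Measurable g) (hg_update : ∀ x ω y, g (x, Function.update ω j y) = g (x, ω)) :
    ∫⁻ ω, g (ω j, ω) ∂infinitePi μ = ∫⁻ p, g p ∂(μ j).prod (infinitePi μ) := by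
  conv_lhs => rw [← infinitePi_map_update μ j]
  rw [lintegral_map (by fun_prop) (by fun_prop)]
  simp [hg_update]

end MeasureTheory.Measure

theorem stationary_of_past_measurable_quasi_invariant_family_general
    {T M : Type*} [MeasurableSpace T] [MeasurableSpace M]
    (θ : Measure T) [IsProbabilityMeasure θ]
    (f : T → M → M) (hf : Measurable (Function.uncurry f))
    (P : Measure (ℤ → T)) [IsProbabilityMeasure P]
    (hP : ∀ (s : Finset ℤ) (B : ℤ → Set T), (∀ i, MeasurableSet (B i)) →
      P {ω | ∀ i ∈ s, ω i ∈ B i} = ∏ i ∈ s, θ (B i))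
    (μ : (ℤ → T) → Measure M) (hμfin : ∀ ω, IsFiniteMeasure (μ ω))
    (hpast : ∀ B : Set M, MeasurableSet B →
      Measurable[MeasurableSpace.comap
        (fun (ω : ℤ → T) (i : {i : ℤ // i < 0}) => ω i.1) MeasurableSpace.pi]
        (fun ω => μ ω B))
    (hquasi : ∀ᵐ ω ∂P, Measure.map (f (ω 0)) (μ ω) = μ (fun i => ω (i + 1))) :
    Measure.map (fun p : T × M => f p.1 p.2) (θ.prod (P.bind μ)) = P.bind μ := by
  have hP_eq : P = Measure.infinitePi fun _ => θ := Measure.eq_infinitePi _ hP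
  have hμ : Measurable μ := Measure.measurable_of_measurable_coe μ fun B hB =>
    (hpast B hB).mono (Measurable.comap_le (by fun_prop)) le_rfl
  let κ : ProbabilityTheory.Kernel (ℤ → T) M := ⟨μ, hμ⟩
  have : ProbabilityTheory.IsSFiniteKernel κ :=
    ProbabilityTheory.Kernel.isSFiniteKernel_of_isFiniteMeasure κ
  have : SFinite (P.bind μ) := (inferInstance : SFinite (P.bind κ))
  have hft : ∀ t, Measurable (f t) := fun t => hf.comp measurable_prodMk_left
  have hF : Measurable fun p : T × M => f p.1 p.2 := hf
  ext B hB
  have hfB : Measurable fun p : T × (ℤ → T) => μ p.2 (f p.1 ⁻¹' B) :=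
    κ.measurable_measure_preimage_uncurry hf hB
  rw [Measure.map_apply hF hB, Measure.prod_apply (hF hB)]
  calc ∫⁻ t, P.bind μ (f t ⁻¹' B) ∂θ
      = ∫⁻ t, ∫⁻ ω, μ ω (f t ⁻¹' B) ∂P ∂θ :=
        lintegral_congr fun t => Measure.bind_apply (hft t hB) hμ.aemeasurable
    _ = ∫⁻ ω, μ ω (f (ω 0) ⁻¹' B) ∂P := by
      rw [← lintegral_prod _ hfB.aemeasurable, hP_eq]
      refine (Measure.lintegral_infinitePi_eval_prodMk (fun _ => θ) 0 hfB fun t ω t' => ?_).symm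
      rw [Measure.eq_of_eq_on_coordinates hpast fun i hi => Function.update_of_ne hi.ne t' ω]
    _ = ∫⁻ ω, μ (fun i => ω (i + 1)) B ∂P := by
      refine lintegral_congr_ae ?_
      filter_upwards [hquasi] with ω h
      rw [← h, Measure.map_apply (hft _) hB]
    _ = P.bind μ B := by
      rw [Measure.bind_apply hB hμ.aemeasurable, ← lintegral_map (f := fun ω => μ ω B)
        ((Measure.measurable_coe hB).comp hμ) (by fun_prop), hP_eq,
        Measure.map_infinitePi_infinitePi_of_inj (add_left_injective 1)]

/-- If `(μ_ω)` is a past-measurable family of finite measures with finite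
total mass which is quasi-invariant, `(f_{ω₀})_* μ_ω = μ_{σω}`, over the two-sided
Bernoulli shift `(T^ℤ, θ^ℤ)`, then the averaged measure `μ = ∫ μ_ω dP(ω)` (here
`P.bind μ`) is stationary for `(f, θ)`: the pushforward of `θ ⊗ μ` under
`(t, x) ↦ f t x` equals `μ`. Here the product measure `P = θ^ℤ` is characterized by
its values on cylinder sets. -/
theorem stationary_of_past_measurable_quasi_invariant_family
    {T M : Type*} [MeasurableSpace T] [MeasurableSpace M]
    (θ : Measure T) [IsProbabilityMeasure θ]
    (f : T → M → M) (hf : Measurable (Function.uncurry f))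
    (P : Measure (ℤ → T)) [IsProbabilityMeasure P]
    (hP : ∀ (s : Finset ℤ) (B : ℤ → Set T), (∀ i, MeasurableSet (B i)) →
      P {ω | ∀ i ∈ s, ω i ∈ B i} = ∏ i ∈ s, θ (B i))
    (μ : (ℤ → T) → Measure M) (hμfin : ∀ ω, IsFiniteMeasure (μ ω))
    (hpast : ∀ B : Set M, MeasurableSet B →
      Measurable[MeasurableSpace.comap
        (fun (ω : ℤ → T) (i : {i : ℤ // i < 0}) => ω i.1) MeasurableSpace.pi]
        (fun ω => μ ω B))
    (hfin : ∫⁻ ω, μ ω Set.univ ∂P < ⊤)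
    (hquasi : ∀ᵐ ω ∂P, Measure.map (f (ω 0)) (μ ω) = μ (fun i => ω (i + 1))) :
    Measure.map (fun p : T × M => f p.1 p.2) (θ.prod (P.bind μ)) = P.bind μ :=
  stationary_of_past_measurable_quasi_invariant_family_general θ f hf P hP μ hμfin hpast hquasi
end

section
/- Let (Ω, 𝒢, P) be a probability space with a measurable bijection σ : Ω → Ω whose inverse is measurable and which preserves P (σ_*P = P), let (Δ, ℬ) be a measurable space, let ω ↦ ν_ω be a kernel of finite measures on Δ (ω ↦ ν_ω(B) measurable for each measurable B ⊆ Δ), let R : Ω × Δ → ℕ be measurable, and let ν be the measure on Ω × Δ defined by ν(A) = ∫_Ω ν_ω({x : (ω, x) ∈ A}) dP(ω). Then ∫_Ω Σ_{n=0}^{∞} ν_{σ^{−n}ω}({x ∈ Δ : R(σ^{−n}ω, x) > n}) dP(ω) = ∫_{Ω×Δ} R dν. In particular, the left-hand side is finite if and only if R is ν-integrable. -/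
open MeasureTheory ProbabilityTheory Filter Set
open scoped ENNReal

/-! Push the sum out of the integral and undo each shift `σ⁻ⁿ`, which preserves `P`; what remains
is `∫ ∑ₙ κ_ω {R_ω > n} dP`, and `∑ₙ μ {f > n} = ∫ f dμ` for `ℕ`-valued `f` (layer-cake formula)
turns the inner sum into `∫ R_ω dκ_ω`. -/

theorem MeasureTheory.MeasurePreserving.of_leftInverse {α β : Type*} [MeasurableSpace α]
    [MeasurableSpace β] {μ : Measure α} {ν : Measure β} {f : α → β} {g : β → α}
    (hf : MeasurePreserving f μ ν) (hg : Measurable g) (hgf : Function.LeftInverse g f) :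
    MeasurePreserving g ν μ :=
  ⟨hg, by rw [← hf.map_eq, Measure.map_map hg hf.measurable, hgf.comp_eq_id, Measure.map_id]⟩

theorem ENNReal.natCast_eq_tsum_indicator_lt (m : ℕ) :
    (m : ℝ≥0∞) = ∑' n : ℕ, {k : ℕ | k < m}.indicator 1 n := by
  rw [← tsum_subtype]
  simp

theorem MeasureTheory.lintegral_natCast_eq_tsum_measure_lt {α : Type*} [MeasurableSpace α]
    (μ : Measure α) {f : α → ℕ} (hf : Measurable f) :
    ∫⁻ x, (f x : ℝ≥0∞) ∂μ = ∑' n : ℕ, μ {x | n < f x} := by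
  have hmeas (n : ℕ) : MeasurableSet {x | n < f x} := hf measurableSet_Ioi
  calc ∫⁻ x, (f x : ℝ≥0∞) ∂μ = ∫⁻ x, ∑' n : ℕ, {x | n < f x}.indicator 1 x ∂μ := by
        congr 1 with x
        rw [ENNReal.natCast_eq_tsum_indicator_lt]
        rfl
    _ = ∑' n : ℕ, μ {x | n < f x} := by
        rw [lintegral_tsum fun n => (measurable_one.indicator (hmeas n)).aemeasurable]
        simp only [lintegral_indicator_one (hmeas _)]

theorem MeasureTheory.MeasurePreserving.lintegral_tsum_comp_iterate {α : Type*}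
    [MeasurableSpace α] {μ : Measure α} {T : α → α} (hT : MeasurePreserving T μ μ)
    {f : ℕ → α → ℝ≥0∞} (hf : ∀ n, Measurable (f n)) :
    ∫⁻ x, ∑' n, f n (T^[n] x) ∂μ = ∫⁻ x, ∑' n, f n x ∂μ := by
  rw [lintegral_tsum (f := fun n x => f n (T^[n] x))
      fun n => ((hf n).comp (hT.iterate n).measurable).aemeasurable,
    lintegral_tsum fun n => (hf n).aemeasurable]
  exact tsum_congr fun n => (hT.iterate n).lintegral_comp (hf n)

theorem total_mass_projection_eq_integral_return_time_general
    {Ω Δ : Type*} [MeasurableSpace Ω] [MeasurableSpace Δ]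
    (P : Measure Ω) [IsProbabilityMeasure P]
    (σ σinv : Ω → Ω) (hσinv : Measurable σinv)
    (hinv1 : ∀ ω, σinv (σ ω) = ω)
    (hσP : MeasurePreserving σ P P)
    (κ : Kernel Ω Δ) [IsFiniteKernel κ]
    (R : Ω → Δ → ℕ) (hR : Measurable fun p : Ω × Δ => R p.1 p.2) :
    ∫⁻ ω, ∑' n : ℕ, κ (σinv^[n] ω) {x | n < R (σinv^[n] ω) x} ∂P =
      ∫⁻ p, (R p.1 p.2 : ℝ≥0∞) ∂(P.compProd κ) := by
  have hσinvP : MeasurePreserving σinv P P := hσP.of_leftInverse hσinv hinv1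
  have hmass (n : ℕ) : Measurable fun ω => κ ω {x | n < R ω x} :=
    Kernel.measurable_kernel_prodMk_left (hR measurableSet_Ioi)
  rw [hσinvP.lintegral_tsum_comp_iterate (f := fun n ω => κ ω {x | n < R ω x}) hmass,
    Measure.lintegral_compProd (f := fun p => (R p.1 p.2 : ℝ≥0∞)) (measurable_from_top.comp hR)]
  exact lintegral_congr fun ω =>
    (lintegral_natCast_eq_tsum_measure_lt (κ ω) (hR.comp measurable_prodMk_left)).symm

/-- The total mass of the projected measure equals the integral of the
return time against the lifted measure:
`∫ Σ_{n≥0} ν_{σ^{-n}ω}({R_{σ^{-n}ω} > n}) dP(ω) = ∫ R d(P ⊗ₘ κ)`. -/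
theorem total_mass_projection_eq_integral_return_time
    {Ω Δ : Type*} [MeasurableSpace Ω] [MeasurableSpace Δ]
    (P : Measure Ω) [IsProbabilityMeasure P]
    (σ σinv : Ω → Ω) (hσ : Measurable σ) (hσinv : Measurable σinv)
    (hinv1 : ∀ ω, σinv (σ ω) = ω) (hinv2 : ∀ ω, σ (σinv ω) = ω)
    (hσP : MeasurePreserving σ P P)
    (κ : Kernel Ω Δ) [IsFiniteKernel κ]
    (R : Ω → Δ → ℕ) (hR : Measurable fun p : Ω × Δ => R p.1 p.2) :
    ∫⁻ ω, ∑' n : ℕ, κ (σinv^[n] ω) {x | n < R (σinv^[n] ω) x} ∂P =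
      ∫⁻ p, (R p.1 p.2 : ℝ≥0∞) ∂(P.compProd κ) :=
  total_mass_projection_eq_integral_return_time_general P σ σinv hσinv hinv1 hσP κ R hR
end
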